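/- arXiv:1608.00292 — 9 statements merged into one kernel-verified Lean document; each statement's English description precedes it below -/
import Mathlib

section
/- Let Z = X₁ ∪ (C × {0}), regarded as a subspace of ℝ². If A is a clopen subset of Z, c ∈ C, and A ∩ ({c} × (0,1)) ≠ ∅, then (c, 0) ∈ A. (That is, X₁ is connectible: no clopen subset of X₁ ∪ (C × {0}) can contain a point of the fiber over c without containing the base point (c,0).) -/
/-- The set of endpoints of the middle-thirds Cantor set: points `c ∈ C` such that for some
`ε > 0` the Cantor set misses `(c - ε, c)` or `(c, c + ε)`. -/
def cantorEndpoints : Set ℝ :=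
  {c | c ∈ cantorSet ∧ ∃ ε > 0,
    Set.Ioo (c - ε) c ∩ cantorSet = ∅ ∨ Set.Ioo c (c + ε) ∩ cantorSet = ∅}

/-- The non-endpoints `C'' = C \ C'` of the Cantor set. -/
def cantorNonEndpoints : Set ℝ := cantorSet \ cantorEndpoints

/-- `X₁ = (C' × (ℚ ∩ (0,1))) ∪ (C'' × ((0,1) \ ℚ)) ⊆ ℝ²`. -/
def X1 : Set (ℝ × ℝ) :=
  (cantorEndpoints ×ˢ (Set.range ((↑) : ℚ → ℝ) ∩ Set.Ioo 0 1)) ∪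
  (cantorNonEndpoints ×ˢ (Set.Ioo 0 1 \ Set.range ((↑) : ℚ → ℝ)))

open Set


lemma one_mem_cantorSet : (1:ℝ) ∈ cantorSet := by
  refine Set.mem_iInter.mpr fun n => ?_
  induction n with
  | zero => simp [preCantorSet]
  | succ n ih => exact Or.inr ⟨1, ih, by norm_num⟩

lemma preCantorSet_subset_unitInterval' {n : ℕ} : preCantorSet n ⊆ Set.Icc 0 1 := by
  induction n with
  | zero => simp [preCantorSet]
  | succ n ih =>
    rintro x (⟨y, hy, rfl⟩ | ⟨y, hy, rfl⟩) <;>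
      · obtain ⟨h0, h1⟩ := ih hy
        constructor <;> [linarith; linarith]

lemma cantorSet_map0 {x : ℝ} (hx : x ∈ cantorSet) : x / 3 ∈ cantorSet := by
  refine Set.mem_iInter.mpr fun n => ?_
  match n with
  | 0 =>
    obtain ⟨h0, h1⟩ := cantorSet_subset_unitInterval hx
    exact ⟨by linarith, by linarith⟩
  | n + 1 => exact Or.inl ⟨x, Set.mem_iInter.mp hx n, rfl⟩

lemma cantorSet_map1 {x : ℝ} (hx : x ∈ cantorSet) : (2 + x) / 3 ∈ cantorSet := by
  refine Set.mem_iInter.mpr fun n => ?_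
  match n with
  | 0 =>
    obtain ⟨h0, h1⟩ := cantorSet_subset_unitInterval hx
    exact ⟨by linarith, by linarith⟩
  | n + 1 => exact Or.inr ⟨x, Set.mem_iInter.mp hx n, rfl⟩

lemma not_cantorSet_T0 {y : ℝ} (hy : y ∈ Set.Icc (0:ℝ) 1) (h : y ∉ cantorSet) :
    y / 3 ∉ cantorSet := by
  intro hmem
  obtain ⟨m, hm⟩ : ∃ m, y ∉ preCantorSet m := by
    by_contra h'; push_neg at h'; exact h (Set.mem_iInter.mpr h')
  have h1 : y / 3 ∈ preCantorSet (m + 1) := Set.mem_iInter.mp hmem (m + 1)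
  rcases h1 with ⟨z, hz, hze⟩ | ⟨z, hz, hze⟩
  · exact hm (by rwa [show y = z by field_simp at hze; linarith])
  · obtain ⟨hz0, _⟩ := preCantorSet_subset_unitInterval' hz
    have : (2:ℝ)/3 ≤ y / 3 := by rw [← hze]; linarith
    have := hy.2; linarith

lemma not_cantorSet_T1 {y : ℝ} (hy : y ∈ Set.Icc (0:ℝ) 1) (h : y ∉ cantorSet) :
    (2 + y) / 3 ∉ cantorSet := by
  intro hmem
  obtain ⟨m, hm⟩ : ∃ m, y ∉ preCantorSet m := by
    by_contra h'; push_neg at h'; exact h (Set.mem_iInter.mpr h')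
  have h1 : (2 + y) / 3 ∈ preCantorSet (m + 1) := Set.mem_iInter.mp hmem (m + 1)
  rcases h1 with ⟨z, hz, hze⟩ | ⟨z, hz, hze⟩
  · obtain ⟨_, hz1⟩ := preCantorSet_subset_unitInterval' hz
    have : (2 + y)/3 ≤ (1:ℝ)/3 := by rw [← hze]; linarith
    have := hy.1; linarith
  · exact hm (by rwa [show y = z by field_simp at hze; linarith])

lemma cantorSet_split {x : ℝ} (hx : x ∈ cantorSet) :
    ∃ y ∈ cantorSet, x = y / 3 ∨ x = (2 + y) / 3 := by
  have hx1 : x ∈ preCantorSet 1 := Set.mem_iInter.mp hx 1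
  rcases hx1 with ⟨y, hy, hye⟩ | ⟨y, hy, hye⟩
  · obtain ⟨hy0, hy1⟩ := preCantorSet_subset_unitInterval' hy
    refine ⟨3 * x, ?_, Or.inl (by ring)⟩
    refine Set.mem_iInter.mpr fun n => ?_
    have hx' : x ∈ preCantorSet (n + 1) := Set.mem_iInter.mp hx (n + 1)
    rcases hx' with ⟨z, hz, hze⟩ | ⟨z, hz, hze⟩
    · rwa [show 3 * x = z by rw [← hze]; ring]
    · exfalso
      obtain ⟨hz0, _⟩ := preCantorSet_subset_unitInterval' hz
      have hx3 : x ≤ 1/3 := by rw [← hye]; dsimp only; linarith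
      have : (2:ℝ)/3 ≤ x := by rw [← hze]; dsimp only; linarith
      linarith
  · obtain ⟨hy0, hy1⟩ := preCantorSet_subset_unitInterval' hy
    refine ⟨3 * x - 2, ?_, Or.inr (by ring)⟩
    refine Set.mem_iInter.mpr fun n => ?_
    have hx' : x ∈ preCantorSet (n + 1) := Set.mem_iInter.mp hx (n + 1)
    rcases hx' with ⟨z, hz, hze⟩ | ⟨z, hz, hze⟩
    · exfalso
      obtain ⟨_, hz1⟩ := preCantorSet_subset_unitInterval' hz
      have hx3 : (2:ℝ)/3 ≤ x := by rw [← hye]; dsimp only; linarith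
      have : x ≤ (1:ℝ)/3 := by rw [← hze]; dsimp only; linarith
      linarith
    · rwa [show 3 * x - 2 = z by rw [← hze]; ring]

lemma cantorSet_gap (n : ℕ) : ∀ x ∈ cantorSet,
    ∃ y ∈ Set.Icc (0:ℝ) 1, y ∉ cantorSet ∧ |y - x| ≤ (1/3)^n := by
  induction n with
  | zero =>
    intro x hx
    refine ⟨1/2, by norm_num, fun h => ?_, ?_⟩
    · have h1 : (1:ℝ)/2 ∈ preCantorSet 1 := Set.mem_iInter.mp h 1
      rcases h1 with ⟨z, hz, hze⟩ | ⟨z, hz, hze⟩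
      · obtain ⟨hz0, hz1⟩ := preCantorSet_subset_unitInterval' hz
        have : z = 3/2 := by field_simp at hze; linarith
        linarith
      · obtain ⟨hz0, hz1⟩ := preCantorSet_subset_unitInterval' hz
        have : z = -(1/2) := by field_simp at hze; linarith
        linarith
    · obtain ⟨h0, h1⟩ := cantorSet_subset_unitInterval hx
      rw [abs_le]; constructor <;> [linarith; linarith]
  | succ n ih =>
    intro x hx
    obtain ⟨d, hd, hcase⟩ := cantorSet_split hx
    obtain ⟨y, hy01, hyC, hyd⟩ := ih d hd
    obtain ⟨hy0, hy1⟩ := hy01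
    rcases hcase with he | he
    · refine ⟨y / 3, ⟨by linarith, by linarith⟩, not_cantorSet_T0 ⟨hy0, hy1⟩ hyC, ?_⟩
      have : y / 3 - x = (y - d) / 3 := by rw [he]; ring
      rw [this, abs_div, abs_of_pos (by norm_num : (0:ℝ) < 3)]
      rw [pow_succ]
      calc |y - d| / 3 ≤ (1/3)^n / 3 := by linarith [hyd]
        _ = (1/3)^n * (1/3) := by ring
    · refine ⟨(2 + y) / 3, ⟨by linarith, by linarith⟩, not_cantorSet_T1 ⟨hy0, hy1⟩ hyC, ?_⟩
      have : (2 + y) / 3 - x = (y - d) / 3 := by rw [he]; ring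
      rw [this, abs_div, abs_of_pos (by norm_num : (0:ℝ) < 3)]
      rw [pow_succ]
      calc |y - d| / 3 ≤ (1/3)^n / 3 := by linarith [hyd]
        _ = (1/3)^n * (1/3) := by ring

lemma cantorSet_perfect (n : ℕ) : ∀ x ∈ cantorSet,
    ∃ y ∈ cantorSet, y ≠ x ∧ |y - x| ≤ (1/3)^n := by
  induction n with
  | zero =>
    intro x hx
    obtain ⟨h0, h1⟩ := cantorSet_subset_unitInterval hx
    by_cases hx0 : x = 0
    · exact ⟨1, one_mem_cantorSet, by rw [hx0]; norm_num, by rw [hx0]; norm_num⟩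
    · refine ⟨0, zero_mem_cantorSet, fun h => hx0 (by rw [← h]), ?_⟩
      rw [abs_le]; constructor <;> [linarith; linarith]
  | succ n ih =>
    intro x hx
    obtain ⟨d, hd, hcase⟩ := cantorSet_split hx
    obtain ⟨y, hyC, hyd, hdist⟩ := ih d hd
    rcases hcase with he | he
    · refine ⟨y / 3, cantorSet_map0 hyC, fun h => hyd ?_, ?_⟩
      · rw [he] at h; field_simp at h; linarith
      · have : y / 3 - x = (y - d) / 3 := by rw [he]; ring
        rw [this, abs_div, abs_of_pos (by norm_num : (0:ℝ) < 3), pow_succ]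
        calc |y - d| / 3 ≤ (1/3)^n / 3 := by linarith [hdist]
          _ = (1/3)^n * (1/3) := by ring
    · refine ⟨(2 + y) / 3, cantorSet_map1 hyC, fun h => hyd ?_, ?_⟩
      · rw [he] at h; field_simp at h; linarith
      · have : (2 + y) / 3 - x = (y - d) / 3 := by rw [he]; ring
        rw [this, abs_div, abs_of_pos (by norm_num : (0:ℝ) < 3), pow_succ]
        calc |y - d| / 3 ≤ (1/3)^n / 3 := by linarith [hdist]
          _ = (1/3)^n * (1/3) := by ring

/-- Endpoints are dense in the Cantor set. -/
lemma endpoint_near {x : ℝ} (hx : x ∈ cantorSet) {ε : ℝ} (hε : 0 < ε) :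
    ∃ e ∈ cantorEndpoints, |e - x| < ε := by
  obtain ⟨n, hn⟩ := exists_pow_lt_of_lt_one hε (by norm_num : (1:ℝ)/3 < 1)
  obtain ⟨y, hy01, hyC, hyx⟩ := cantorSet_gap n x hx
  have hyx' : |y - x| < ε := lt_of_le_of_lt hyx hn
  have hxy : x ≠ y := fun h => hyC (h ▸ hx)
  rcases lt_or_gt_of_ne hxy with hlt | hgt
  · -- x < y : take e = sSup (cantorSet ∩ Icc x y)
    set S := cantorSet ∩ Icc x y with hS
    have hScpt : IsCompact S := (isCompact_Icc).inter_left isClosed_cantorSet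
    have hSne : S.Nonempty := ⟨x, hx, le_refl x, le_of_lt hlt⟩
    have heS : sSup S ∈ S := hScpt.sSup_mem hSne
    set e := sSup S
    have heC : e ∈ cantorSet := heS.1
    have hex : x ≤ e := heS.2.1
    have hey : e ≤ y := heS.2.2
    have heny : e ≠ y := fun h => hyC (h ▸ heC)
    have heyl : e < y := lt_of_le_of_ne hey heny
    refine ⟨e, ⟨heC, y - e, by linarith, Or.inr ?_⟩, ?_⟩
    · ext z; simp only [mem_inter_iff, mem_Ioo, mem_empty_iff_false, iff_false, not_and]
      intro ⟨hz1, hz2⟩ hzC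
      have : z ∈ S := ⟨hzC, by linarith, by linarith⟩
      exact absurd (le_csSup hScpt.bddAbove this) (not_le.mpr hz1)
    · rw [abs_of_nonneg (by linarith)]
      rw [abs_of_pos (by linarith)] at hyx'
      linarith
  · -- y < x : take e = sInf (cantorSet ∩ Icc y x)
    set S := cantorSet ∩ Icc y x with hS
    have hScpt : IsCompact S := (isCompact_Icc).inter_left isClosed_cantorSet
    have hSne : S.Nonempty := ⟨x, hx, le_of_lt hgt, le_refl x⟩
    have heS : sInf S ∈ S := hScpt.sInf_mem hSne
    set e := sInf S
    have heC : e ∈ cantorSet := heS.1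
    have hey : y ≤ e := heS.2.1
    have hex : e ≤ x := heS.2.2
    have heny : e ≠ y := fun h => hyC (h ▸ heC)
    have heyl : y < e := lt_of_le_of_ne hey (Ne.symm heny)
    refine ⟨e, ⟨heC, e - y, by linarith, Or.inl ?_⟩, ?_⟩
    · ext z; simp only [mem_inter_iff, mem_Ioo, mem_empty_iff_false, iff_false, not_and]
      intro ⟨hz1, hz2⟩ hzC
      have hz1' : y < z := by linarith
      have : z ∈ S := ⟨hzC, by linarith, by linarith⟩
      exact absurd (csInf_le hScpt.bddBelow this) (not_le.mpr hz2)
    · rw [abs_of_nonpos (by linarith), neg_sub]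
      rw [abs_of_neg (by linarith), neg_sub] at hyx'
      linarith

/-- The set of endpoints is countable. -/
lemma countable_cantorEndpoints : cantorEndpoints.Countable := by
  have hsub : cantorEndpoints ⊆
      (⋃ q : ℚ, {c : ℝ | c < q ∧ Ioo c (q:ℝ) ∩ cantorSet = ∅ ∧ c ∈ cantorSet}) ∪
      (⋃ q : ℚ, {c : ℝ | (q:ℝ) < c ∧ Ioo (q:ℝ) c ∩ cantorSet = ∅ ∧ c ∈ cantorSet}) := by
    rintro c ⟨hcC, ε, hε, hgap⟩
    rcases hgap with hgap | hgap
    · obtain ⟨q, hq1, hq2⟩ := exists_rat_btwn (show c - ε < c by linarith)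
      refine Or.inr (mem_iUnion.mpr ⟨q, hq2, ?_, hcC⟩)
      apply subset_empty_iff.mp
      rw [← hgap]
      intro z ⟨⟨hz1, hz2⟩, hzC⟩
      exact ⟨⟨by linarith, hz2⟩, hzC⟩
    · obtain ⟨q, hq1, hq2⟩ := exists_rat_btwn (show c < c + ε by linarith)
      refine Or.inl (mem_iUnion.mpr ⟨q, hq1, ?_, hcC⟩)
      apply subset_empty_iff.mp
      rw [← hgap]
      intro z ⟨⟨hz1, hz2⟩, hzC⟩
      exact ⟨⟨hz1, by linarith⟩, hzC⟩
  refine (Set.Countable.union ?_ ?_).mono hsub <;>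
    refine countable_iUnion fun q => Set.Subsingleton.countable ?_
  · rintro a ⟨ha1, ha2, ha3⟩ b ⟨hb1, hb2, hb3⟩
    by_contra hne
    rcases lt_or_gt_of_ne hne with h | h
    · exact absurd (show b ∈ Ioo a (q:ℝ) ∩ cantorSet from ⟨⟨h, hb1⟩, hb3⟩) (by rw [ha2]; exact notMem_empty b)
    · exact absurd (show a ∈ Ioo b (q:ℝ) ∩ cantorSet from ⟨⟨h, ha1⟩, ha3⟩) (by rw [hb2]; exact notMem_empty a)
  · rintro a ⟨ha1, ha2, ha3⟩ b ⟨hb1, hb2, hb3⟩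
    by_contra hne
    rcases lt_or_gt_of_ne hne with h | h
    · exact absurd (show a ∈ Ioo (q:ℝ) b ∩ cantorSet from ⟨⟨ha1, h⟩, ha3⟩) (by rw [hb2]; exact notMem_empty a)
    · exact absurd (show b ∈ Ioo (q:ℝ) a ∩ cantorSet from ⟨⟨hb1, h⟩, hb3⟩) (by rw [ha2]; exact notMem_empty b)

/-- Every point of `{x} × [0,1]`, for `x` in the Cantor set, is in the closure of `Z`. -/
lemma fiber_dense {x u : ℝ} (hx : x ∈ cantorSet) (hu : u ∈ Set.Icc (0:ℝ) 1) :
    (x, u) ∈ closure (X1 ∪ cantorSet ×ˢ ({0} : Set ℝ)) := by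
  by_cases hE : x ∈ cantorEndpoints
  · have hsub : {x} ×ˢ (Set.range ((↑) : ℚ → ℝ) ∩ Set.Ioo 0 1) ⊆
        X1 ∪ cantorSet ×ˢ ({0} : Set ℝ) := by
      rintro ⟨a, b⟩ ⟨ha, hb⟩
      have ha' : a = x := ha
      exact Or.inl (Or.inl ⟨ha' ▸ hE, hb⟩)
    refine closure_mono hsub ?_
    rw [closure_prod_eq]
    refine ⟨by simp, ?_⟩
    have hdq : Dense (Set.range ((↑) : ℚ → ℝ)) := Rat.denseRange_cast
    have h1 : Set.Ioo (0:ℝ) 1 ⊆ closure (Set.Ioo (0:ℝ) 1 ∩ Set.range ((↑) : ℚ → ℝ)) :=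
      hdq.open_subset_closure_inter isOpen_Ioo
    have h2 : Set.Icc (0:ℝ) 1 ⊆ closure (Set.range ((↑) : ℚ → ℝ) ∩ Set.Ioo (0:ℝ) 1) := by
      rw [Set.inter_comm]
      calc Set.Icc (0:ℝ) 1 = closure (Set.Ioo (0:ℝ) 1) := (closure_Ioo one_ne_zero.symm).symm
        _ ⊆ closure (closure (Set.Ioo (0:ℝ) 1 ∩ Set.range ((↑) : ℚ → ℝ))) := closure_mono h1
        _ = _ := closure_closure
    exact h2 hu
  · have hsub : {x} ×ˢ (Set.Ioo (0:ℝ) 1 \ Set.range ((↑) : ℚ → ℝ)) ⊆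
        X1 ∪ cantorSet ×ˢ ({0} : Set ℝ) := by
      rintro ⟨a, b⟩ ⟨ha, hb⟩
      have ha' : a = x := ha
      exact Or.inl (Or.inr ⟨ha' ▸ ⟨hx, hE⟩, hb⟩)
    refine closure_mono hsub ?_
    rw [closure_prod_eq]
    refine ⟨by simp, ?_⟩
    have h1 : Set.Ioo (0:ℝ) 1 ⊆ closure (Set.Ioo (0:ℝ) 1 ∩ {r : ℝ | Irrational r}) :=
      dense_irrational.open_subset_closure_inter isOpen_Ioo
    have heq : Set.Ioo (0:ℝ) 1 ∩ {r : ℝ | Irrational r} =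
        Set.Ioo (0:ℝ) 1 \ Set.range ((↑) : ℚ → ℝ) := rfl
    have h2 : Set.Icc (0:ℝ) 1 ⊆ closure (Set.Ioo (0:ℝ) 1 \ Set.range ((↑) : ℚ → ℝ)) := by
      rw [← heq]
      calc Set.Icc (0:ℝ) 1 = closure (Set.Ioo (0:ℝ) 1) := (closure_Ioo one_ne_zero.symm).symm
        _ ⊆ closure (closure _) := closure_mono h1
        _ = _ := closure_closure
    exact h2 hu

/-- `X₁` is connectible: if `A` is a clopen subset of `Z = X₁ ∪ (C × {0})` (with the subspace
topology from `ℝ²`) meeting the fiber `{c} × (0,1)` for some `c ∈ C`, then `(c, 0) ∈ A`. -/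
theorem stmt0 (A : Set ↥(X1 ∪ cantorSet ×ˢ ({0} : Set ℝ))) (hA : IsClopen A)
    (c : ℝ) (hc : c ∈ cantorSet)
    (hne : ∃ z ∈ A, (z : ℝ × ℝ).1 = c ∧ (z : ℝ × ℝ).2 ∈ Set.Ioo (0 : ℝ) 1) :
    (⟨(c, 0), Or.inr ⟨hc, rfl⟩⟩ : ↥(X1 ∪ cantorSet ×ˢ ({0} : Set ℝ))) ∈ A := by
  by_contra h0
  obtain ⟨z0, hz0A, hz01, hz02⟩ := hne
  set t : ℝ := (z0 : ℝ × ℝ).2 with ht_def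
  have ht : t ∈ Set.Ioo (0:ℝ) 1 := hz02
  have hz0v : (z0 : ℝ × ℝ) = (c, t) := Prod.ext hz01 rfl
  -- extract open sets
  obtain ⟨U, hUopen, hUeq⟩ := isOpen_induced_iff.mp hA.2
  obtain ⟨V, hVopen, hVeq⟩ := isOpen_induced_iff.mp hA.1.isOpen_compl
  have hctU : (c, t) ∈ U := by
    have : z0 ∈ Subtype.val ⁻¹' U := hUeq ▸ hz0A
    rwa [Set.mem_preimage, hz0v] at this
  have hc0V : (c, (0:ℝ)) ∈ V := by
    have : (⟨(c, 0), Or.inr ⟨hc, rfl⟩⟩ : ↥(X1 ∪ cantorSet ×ˢ ({0} : Set ℝ))) ∈ Subtype.val ⁻¹' V := hVeq ▸ h0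
    exact this
  obtain ⟨εA, hεA, hballA⟩ := Metric.isOpen_iff.mp hUopen _ hctU
  obtain ⟨εB, hεB, hballB⟩ := Metric.isOpen_iff.mp hVopen _ hc0V
  set ρ : ℝ := min (min εA εB) (min t (1 - t)) / 2 with hρdef
  have hρpos : 0 < ρ := by
    apply div_pos _ (by norm_num)
    exact lt_min (lt_min hεA hεB) (lt_min ht.1 (by linarith [ht.2]))
  have hρεA : ρ < εA := by
    have h1 : min (min εA εB) (min t (1 - t)) ≤ εA :=
      le_trans (min_le_left _ _) (min_le_left _ _)
    rw [hρdef]; linarith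
  have hρεB : ρ < εB := by
    have h1 : min (min εA εB) (min t (1 - t)) ≤ εB :=
      le_trans (min_le_left _ _) (min_le_right _ _)
    rw [hρdef]; linarith
  have hρt : ρ < t := by
    have h1 : min (min εA εB) (min t (1 - t)) ≤ t :=
      le_trans (min_le_right _ _) (min_le_left _ _)
    rw [hρdef]; linarith [hρpos]
  have hρ1t : ρ < 1 - t := by
    have h1 : min (min εA εB) (min t (1 - t)) ≤ 1 - t :=
      le_trans (min_le_right _ _) (min_le_right _ _)
    rw [hρdef]; linarith [hρpos]
  -- the images of A and its complement
  set A' : Set (ℝ × ℝ) := Subtype.val '' A with hA'def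
  set B' : Set (ℝ × ℝ) := Subtype.val '' (Aᶜ : Set ↥(X1 ∪ cantorSet ×ˢ ({0} : Set ℝ))) with hB'def
  have hZ_eq : A' ∪ B' = X1 ∪ cantorSet ×ˢ ({0} : Set ℝ) := by
    rw [hA'def, hB'def, ← Set.image_union, Set.union_compl_self, Set.image_univ,
      Subtype.range_coe]
  have hA'U : A' ⊆ U := by
    rintro w ⟨a, ha, rfl⟩
    rw [← hUeq] at ha; exact ha
  have hA'mem : ∀ w (hw : w ∈ X1 ∪ cantorSet ×ˢ ({0} : Set ℝ)), w ∈ U → w ∈ A' := by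
    intro w hw hwU
    refine ⟨⟨w, hw⟩, ?_, rfl⟩
    rw [← hUeq]; exact hwU
  have hB'mem : ∀ w (hw : w ∈ X1 ∪ cantorSet ×ˢ ({0} : Set ℝ)), w ∈ V → w ∈ B' := by
    intro w hw hwV
    refine ⟨⟨w, hw⟩, ?_, rfl⟩
    rw [← hVeq]; exact hwV
  -- closures
  obtain ⟨CA, hCAclosed, hCAeq⟩ := isClosed_induced_iff.mp hA.1
  obtain ⟨CB, hCBclosed, hCBeq⟩ := isClosed_induced_iff.mp hA.2.isClosed_compl
  have hclA : closure A' ∩ (X1 ∪ cantorSet ×ˢ ({0} : Set ℝ)) ⊆ A' := by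
    intro w ⟨hw1, hw2⟩
    have hACA : A' ⊆ CA := by
      rintro v ⟨a, ha, rfl⟩
      rw [← hCAeq] at ha; exact ha
    have : w ∈ CA := hCAclosed.closure_subset_iff.mpr hACA hw1
    refine ⟨⟨w, hw2⟩, ?_, rfl⟩
    rw [← hCAeq]; exact this
  have hclB : closure B' ∩ (X1 ∪ cantorSet ×ˢ ({0} : Set ℝ)) ⊆ B' := by
    intro w ⟨hw1, hw2⟩
    have hBCB : B' ⊆ CB := by
      rintro v ⟨a, ha, rfl⟩
      rw [← hCBeq] at ha; exact ha
    have : w ∈ CB := hCBclosed.closure_subset_iff.mpr hBCB hw1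
    refine ⟨⟨w, hw2⟩, ?_, rfl⟩
    rw [← hCBeq]; exact this
  set F : Set (ℝ × ℝ) := closure A' ∩ closure B' with hFdef
  have hFclosed : IsClosed F := isClosed_closure.inter isClosed_closure
  have hFZ : ∀ w ∈ F, w ∉ X1 ∪ cantorSet ×ˢ ({0} : Set ℝ) := by
    rintro w ⟨hwA, hwB⟩ hwZ
    obtain ⟨a, haA, haeq⟩ := hclA ⟨hwA, hwZ⟩
    obtain ⟨b, hbB, hbeq⟩ := hclB ⟨hwB, hwZ⟩
    have : a = b := Subtype.val_injective (haeq.trans hbeq.symm)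
    exact hbB (this ▸ haA)
  -- key claim: for any x in the Cantor set close to c, there is a point of F
  -- on the segment {x} × [0, 1) at positive height
  have key : ∀ x ∈ cantorSet, |x - c| < ρ →
      ∃ u : ℝ, 0 < u ∧ u < 1 ∧ (x, u) ∈ F := by
    intro x hxC hxc
    -- a point of A' in the fiber
    have hs : ∃ s : ℝ, s ∈ Set.Ioo (t - ρ) (t + ρ) ∧ (x, s) ∈ X1 := by
      by_cases hE : x ∈ cantorEndpoints
      · obtain ⟨q, hq1, hq2⟩ := exists_rat_btwn (show t - ρ < t + ρ by linarith)
        exact ⟨q, ⟨hq1, hq2⟩, Or.inl ⟨hE, ⟨q, rfl⟩, by constructor <;> linarith⟩⟩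
      · obtain ⟨s, hsirr, hs1, hs2⟩ := exists_irrational_btwn
          (show t - ρ < t + ρ by linarith)
        exact ⟨s, ⟨hs1, hs2⟩, Or.inr ⟨⟨hxC, hE⟩, ⟨by constructor <;> linarith, hsirr⟩⟩⟩
    obtain ⟨s, ⟨hs1, hs2⟩, hsX1⟩ := hs
    have hs0 : 0 < s := by linarith
    have hs1' : s < 1 := by linarith
    have hxsZ : (x, s) ∈ X1 ∪ cantorSet ×ˢ ({0} : Set ℝ) := Or.inl hsX1
    have hxsU : (x, s) ∈ U := by
      apply hballA
      rw [Metric.mem_ball, Prod.dist_eq]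
      apply max_lt
      · rw [Real.dist_eq]; linarith [hxc, hρεA]
      · rw [Real.dist_eq, abs_lt]; constructor <;> [linarith; linarith]
    have hxsA : (x, s) ∈ A' := hA'mem _ hxsZ hxsU
    have hx0Z : (x, (0:ℝ)) ∈ X1 ∪ cantorSet ×ˢ ({0} : Set ℝ) := Or.inr ⟨hxC, rfl⟩
    have hx0V : (x, (0:ℝ)) ∈ V := by
      apply hballB
      rw [Metric.mem_ball, Prod.dist_eq]
      apply max_lt
      · rw [Real.dist_eq]; linarith [hxc, hρεB]
      · show dist (0:ℝ) 0 < εB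
        rw [Real.dist_eq, sub_self, abs_zero]; exact hεB
    have hx0B : (x, (0:ℝ)) ∈ B' := hB'mem _ hx0Z hx0V
    -- the segment
    set K : Set (ℝ × ℝ) := (fun u : ℝ => (x, u)) '' Set.Icc 0 s with hKdef
    have hKconn : IsPreconnected K :=
      isPreconnected_Icc.image _ (Continuous.continuousOn (continuous_const.prodMk continuous_id))
    have hKsub : K ⊆ closure A' ∪ closure B' := by
      rintro w ⟨u, hu, rfl⟩
      have : (x, u) ∈ closure (X1 ∪ cantorSet ×ˢ ({0} : Set ℝ)) :=
        fiber_dense hxC ⟨hu.1, le_trans hu.2 (by linarith)⟩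
      rwa [← hZ_eq, closure_union] at this
    have hne1 : (K ∩ closure A').Nonempty :=
      ⟨(x, s), ⟨s, ⟨le_of_lt hs0, le_refl s⟩, rfl⟩, subset_closure hxsA⟩
    have hne2 : (K ∩ closure B').Nonempty :=
      ⟨(x, 0), ⟨0, ⟨le_refl 0, le_of_lt hs0⟩, rfl⟩, subset_closure hx0B⟩
    obtain ⟨w, hwK, hwF⟩ := (isPreconnected_closed_iff.mp hKconn) (closure A') (closure B')
      isClosed_closure isClosed_closure hKsub hne1 hne2
    obtain ⟨u, huIcc, rfl⟩ := hwK
    refine ⟨u, ?_, ?_, hwF⟩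
    · rcases lt_or_eq_of_le huIcc.1 with h | h
      · exact h
      · exfalso
        apply hFZ ((x : ℝ), u) hwF
        rw [← h]
        exact Or.inr ⟨hxC, rfl⟩
    · linarith [huIcc.2]
  -- Baire category on the Cantor set
  haveI : CompleteSpace ↥cantorSet := isClosed_cantorSet.completeSpace_coe
  set FF : ℚ → Set ↥cantorSet :=
    fun q => {z | ((z : ℝ), (q : ℝ)) ∈ F ∧ (q : ℝ) ∈ Set.Ioo (0:ℝ) 1} with hFFdef
  have hFFclosed : ∀ q, IsClosed (FF q) := by
    intro q
    by_cases h : (q : ℝ) ∈ Set.Ioo (0:ℝ) 1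
    · have : FF q = (fun z : ↥cantorSet => ((z : ℝ), (q : ℝ))) ⁻¹' F :=
        Set.ext fun z => ⟨fun hz => hz.1, fun hz => ⟨hz, h⟩⟩
      rw [this]
      exact hFclosed.preimage (continuous_subtype_val.prodMk continuous_const)
    · have : FF q = ∅ := Set.eq_empty_iff_forall_notMem.mpr fun z hz => h hz.2
      rw [this]; exact isClosed_empty
  have hFFint : ∀ q, interior (FF q) = ∅ := by
    intro q
    by_contra hne'
    obtain ⟨z, hz⟩ := Set.nonempty_iff_ne_empty.mpr hne'
    obtain ⟨O, hOopen, hOeq⟩ :=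
      isOpen_induced_iff.mp (isOpen_interior : IsOpen (interior (FF q)))
    have hzO : (z : ℝ) ∈ O := by rw [← hOeq] at hz; exact hz
    obtain ⟨r, hr, hball⟩ := Metric.isOpen_iff.mp hOopen _ hzO
    obtain ⟨e, heE, her⟩ := endpoint_near z.2 hr
    have heC : e ∈ cantorSet := heE.1
    have heO : e ∈ O := hball (by rwa [Metric.mem_ball, Real.dist_eq])
    have heFF : (⟨e, heC⟩ : ↥cantorSet) ∈ FF q := by
      have : (⟨e, heC⟩ : ↥cantorSet) ∈ interior (FF q) := by
        rw [← hOeq]; exact heO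
      exact interior_subset this
    obtain ⟨heF, hq01⟩ := heFF
    exact hFZ _ heF (Or.inl (Or.inl ⟨heE, ⟨q, rfl⟩, hq01⟩))
  have hsingleton : ∀ p : ↥cantorSet, Dense ({p}ᶜ : Set ↥cantorSet) := by
    intro p
    rw [← interior_eq_empty_iff_dense_compl]
    by_contra hne'
    obtain ⟨z, hz⟩ := Set.nonempty_iff_ne_empty.mpr hne'
    obtain ⟨O, hOopen, hOeq⟩ :=
      isOpen_induced_iff.mp (isOpen_interior : IsOpen (interior ({p} : Set ↥cantorSet)))
    have hzO : (z : ℝ) ∈ O := by rw [← hOeq] at hz; exact hz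
    obtain ⟨r, hr, hball⟩ := Metric.isOpen_iff.mp hOopen _ hzO
    obtain ⟨n, hn⟩ := exists_pow_lt_of_lt_one hr (by norm_num : (1:ℝ)/3 < 1)
    obtain ⟨y, hyC, hyne, hyd⟩ := cantorSet_perfect n _ z.2
    have hyO : y ∈ O := hball (by rw [Metric.mem_ball, Real.dist_eq]; linarith)
    have hy_int : (⟨y, hyC⟩ : ↥cantorSet) ∈ interior ({p} : Set ↥cantorSet) := by
      rw [← hOeq]; exact hyO
    have hz_int : z ∈ interior ({p} : Set ↥cantorSet) := hz
    have h1 : (⟨y, hyC⟩ : ↥cantorSet) ∈ ({p} : Set ↥cantorSet) := interior_subset hy_int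
    have h2 : z ∈ ({p} : Set ↥cantorSet) := interior_subset hz_int
    rw [Set.mem_singleton_iff] at h1 h2
    exact hyne (congrArg Subtype.val (h1.trans h2.symm))
  set E' : Set ↥cantorSet := {z | (z : ℝ) ∈ cantorEndpoints} with hE'def
  have hE'count : E'.Countable :=
    countable_cantorEndpoints.preimage Subtype.val_injective
  set R : Set ↥cantorSet := (⋂ q : ℚ, (FF q)ᶜ) ∩ (⋂ e ∈ E', ({e}ᶜ : Set ↥cantorSet))
    with hRdef
  have hR : R ∈ residual ↥cantorSet := by
    apply Filter.inter_mem
    · rw [countable_iInter_mem]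
      intro q
      apply residual_of_dense_open (hFFclosed q).isOpen_compl
      rw [← interior_eq_empty_iff_dense_compl]
      exact hFFint q
    · rw [countable_bInter_mem hE'count]
      intro e _
      exact residual_of_dense_open isClosed_singleton.isOpen_compl (hsingleton e)
  have hRdense : Dense R := dense_of_mem_residual hR
  set O0 : Set ↥cantorSet := {z | |(z : ℝ) - c| < ρ} with hO0def
  have hO0open : IsOpen O0 := by
    have : O0 = (fun z : ↥cantorSet => (z : ℝ)) ⁻¹' Metric.ball c ρ := by
      ext z; simp [Metric.mem_ball, Real.dist_eq, hO0def]
    rw [this]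
    exact (Metric.isOpen_ball).preimage continuous_subtype_val
  have hO0ne : O0.Nonempty := ⟨⟨c, hc⟩, show |c - c| < ρ by
    rw [sub_self, abs_zero]; exact hρpos⟩
  obtain ⟨x, hxR, hxO0⟩ := hRdense.exists_mem_open hO0open hO0ne
  -- apply the key claim
  obtain ⟨u, hu0, hu1, huF⟩ := key (x : ℝ) x.2 hxO0
  have hxE : (x : ℝ) ∉ cantorEndpoints := by
    intro hE
    have := hxR.2
    rw [Set.mem_iInter₂] at this
    exact this x hE rfl
  have hurat : ∃ q : ℚ, (q : ℝ) = u := by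
    by_contra hirr
    push_neg at hirr
    have : ((x : ℝ), u) ∈ X1 ∪ cantorSet ×ˢ ({0} : Set ℝ) :=
      Or.inl (Or.inr ⟨⟨x.2, hxE⟩, ⟨⟨hu0, hu1⟩, fun ⟨q, hq⟩ => hirr q hq⟩⟩)
    exact hFZ _ huF this
  obtain ⟨q, hq⟩ := hurat
  have hxFF : x ∈ FF q := ⟨by rw [hq]; exact huF, by rw [hq]; exact ⟨hu0, hu1⟩⟩
  have := hxR.1
  rw [Set.mem_iInter] at this
  exact this q hxFF
end

section
/- If A is a nonempty clopen subset of the complete Erdős space 𝔈 (with its subspace topology inherited from ℓ²), then the set of norms {‖x‖ : x ∈ A} is unbounded above: for every M ∈ ℝ there exists x ∈ A with ‖x‖ > M. -/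
/-!
Order `ℓ²` coordinatewise. For `0 ≤ x ≤ y` one has `‖y - x‖² ≤ ‖y‖² - ‖x‖²`, so a chain in a
closed, norm-bounded subset of the positive cone is a Cauchy net whose limit bounds it; by Zorn
such a set has a maximal element. If a nonempty clopen `A ⊆ 𝔈` had bounded norms, its image in
`ℓ²` would be such a set (`𝔈` is closed in `ℓ²`). But at any point of `𝔈` a coordinate below
`1/(n+1)` can be raised to `1/(n+1)`, giving a strictly larger point of `𝔈` arbitrarily close
by, which stays in the open set `A`: no point of `A` is maximal.
-/

/-- The complete Erdős space: the set of points of `ℓ²` all of whose coordinates lie in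
`{0} ∪ {1/n : n ∈ ℕ, n ≥ 1}`. -/
def ErdosSpace : Set (lp (fun _ : ℕ => ℝ) 2) :=
  {x | ∀ i : ℕ, (x : ∀ _ : ℕ, ℝ) i = 0 ∨ ∃ n : ℕ, 0 < n ∧ (x : ∀ _ : ℕ, ℝ) i = 1 / n}

open Metric Filter Topology Set

local notation "ℓ²(" α ")" => lp (fun _ : α => ℝ) 2

/-- Mathlib puts no order on `lp`; we use the coordinatewise one, locally. -/
abbrev lp.coordPartialOrder {α : Type*} : PartialOrder ℓ²(α) :=
  PartialOrder.lift (fun (x : ℓ²(α)) (i : α) => x i) fun _ _ => lp.ext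

attribute [local instance] lp.coordPartialOrder

namespace lp

variable {α : Type*}

theorem coord_le_iff {x y : ℓ²(α)} : x ≤ y ↔ ∀ i, x i ≤ y i := Iff.rfl

instance : OrderClosedTopology ℓ²(α) where
  isClosed_le' := by
    simp only [coord_le_iff, ofPred_forall]
    exact isClosed_iInter fun i =>
      isClosed_le ((lipschitzWith_one_eval 2 i).continuous.comp continuous_fst)
        ((lipschitzWith_one_eval 2 i).continuous.comp continuous_snd)

theorem norm_sub_sq_le_of_le {x y : ℓ²(α)} (hx : 0 ≤ x) (hxy : x ≤ y) :
    ‖y - x‖ ^ 2 ≤ ‖y‖ ^ 2 - ‖x‖ ^ 2 := by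
  have hinner : 0 ≤ inner ℝ x (y - x) := by
    rw [inner_eq_tsum]
    refine tsum_nonneg fun i => ?_
    rw [coeFn_sub, Pi.sub_apply, Real.inner_apply]
    exact mul_nonneg (hx i) (sub_nonneg.2 (hxy i))
  have := norm_add_sq_real x (y - x)
  rw [add_sub_cancel] at this
  linarith

theorem norm_le_norm_of_le {x y : ℓ²(α)} (hx : 0 ≤ x) (hxy : x ≤ y) : ‖x‖ ≤ ‖y‖ := by
  have := norm_sub_sq_le_of_le hx hxy
  nlinarith [norm_nonneg x, norm_nonneg y, sq_nonneg ‖y - x‖]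

theorem cauchySeq_of_monotone {ι : Type*} [Nonempty ι] [SemilatticeSup ι] {u : ι → ℓ²(α)}
    (hu : Monotone u) (h0 : ∀ i, 0 ≤ u i) (hbdd : BddAbove (range fun i => ‖u i‖)) :
    CauchySeq u := by
  have hmono : Monotone fun i => ‖u i‖ ^ 2 := fun i j hij =>
    pow_le_pow_left₀ (norm_nonneg _) (norm_le_norm_of_le (h0 i) (hu hij)) 2
  have hbdd' : BddAbove (range fun i => ‖u i‖ ^ 2) := by
    obtain ⟨C, hC⟩ := hbdd
    refine ⟨C ^ 2, forall_mem_range.2 fun i => ?_⟩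
    exact pow_le_pow_left₀ (norm_nonneg _) (hC (mem_range_self i)) 2
  obtain ⟨L, hfL, hfle⟩ : ∃ L, Tendsto (fun i => ‖u i‖ ^ 2) atTop (𝓝 L) ∧ ∀ i, ‖u i‖ ^ 2 ≤ L :=
    ⟨_, tendsto_atTop_ciSup hmono hbdd', le_ciSup hbdd'⟩
  have hL : Tendsto (fun i => L - ‖u i‖ ^ 2) atTop (𝓝 0) := by
    simpa only [sub_self] using hfL.const_sub L
  refine cauchySeq_of_le_tendsto_0' (fun i => √(L - ‖u i‖ ^ 2)) (fun i j hij => ?_)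
    (by simpa using hL.sqrt)
  rw [dist_comm, dist_eq_norm]
  refine Real.le_sqrt_of_sq_le ?_
  linarith [norm_sub_sq_le_of_le (h0 i) (hu hij), hfle j]

theorem exists_upperBound_of_isChain {B : Set ℓ²(α)} (hB : IsClosed B) (h0 : ∀ x ∈ B, 0 ≤ x)
    (hbdd : BddAbove (norm '' B)) {c : Set ℓ²(α)} (hcB : c ⊆ B) (hc : IsChain (· ≤ ·) c)
    (hne : c.Nonempty) : ∃ ub ∈ B, ∀ z ∈ c, z ≤ ub := by
  classical
  let _ := hc.linearOrder
  have := hne.to_subtype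
  have hcauchy : CauchySeq (Subtype.val : c → ℓ²(α)) :=
    cauchySeq_of_monotone (fun _ _ h => h) (fun z => h0 _ (hcB z.2))
      (hbdd.mono (range_subset_iff.2 fun z => mem_image_of_mem _ (hcB z.2)))
  obtain ⟨y, hy⟩ := cauchySeq_tendsto_of_complete hcauchy
  exact ⟨y, hB.mem_of_tendsto hy (Eventually.of_forall fun z => hcB z.2),
    fun z hz => ge_of_tendsto hy (eventually_ge_atTop (⟨z, hz⟩ : c))⟩

theorem exists_le_maximal_of_isClosed {B : Set ℓ²(α)} (hB : IsClosed B) (h0 : ∀ x ∈ B, 0 ≤ x)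
    (hbdd : BddAbove (norm '' B)) {x : ℓ²(α)} (hx : x ∈ B) : ∃ m, x ≤ m ∧ Maximal (· ∈ B) m :=
  zorn_le_nonempty₀ B (fun _ hcB hc y hy => exists_upperBound_of_isChain hB h0 hbdd hcB hc ⟨y, hy⟩)
    x hx

theorem exists_abs_lt [Infinite α] (x : ℓ²(α)) {t : ℝ} (ht : 0 < t) : ∃ i, |x i| < t := by
  have hsq := (summable_inner (𝕜 := ℝ) x x).tendsto_cofinite_zero
  obtain ⟨i, hi⟩ := (hsq.eventually (gt_mem_nhds (mul_pos ht ht))).exists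
  rw [Real.inner_apply, ← sq, ← sq] at hi
  exact ⟨i, abs_lt_of_sq_lt_sq hi ht.le⟩

end lp

theorem isClosed_range_one_div_natCast : IsClosed (range fun n : ℕ => (1 : ℝ) / n) := by
  have hcpt := (tendsto_one_div_atTop_nhds_zero_nat (𝕜 := ℝ)).isCompact_insert_range
  have h0 : (0 : ℝ) ∈ range fun n : ℕ => (1 : ℝ) / n := ⟨0, by simp⟩
  rw [insert_eq_of_mem h0] at hcpt
  exact hcpt.isClosed

namespace ErdosSpace

open lp

/-- The value `n = 0` produces the coordinate `0`, since `1 / 0 = 0` in Lean. -/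
theorem mem_iff {x : ℓ²(ℕ)} : x ∈ ErdosSpace ↔ ∀ i, x i ∈ range fun n : ℕ => (1 : ℝ) / n := by
  refine forall_congr' fun i => ⟨?_, ?_⟩
  · rintro (h | ⟨n, -, h⟩)
    · exact ⟨0, by simp [h]⟩
    · exact ⟨n, h.symm⟩
  · rintro ⟨n, h⟩
    rcases n.eq_zero_or_pos with rfl | hn
    · exact Or.inl (by simpa using h.symm)
    · exact Or.inr ⟨n, hn, h.symm⟩

theorem isClosed : IsClosed ErdosSpace := by
  have hset : ErdosSpace = {x : ℓ²(ℕ) | ∀ i, x i ∈ range fun n : ℕ => (1 : ℝ) / n} :=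
    ext fun _ => mem_iff
  rw [hset, ofPred_forall]
  exact isClosed_iInter fun i =>
    isClosed_range_one_div_natCast.preimage (lipschitzWith_one_eval 2 i).continuous

theorem nonneg {x : ℓ²(ℕ)} (hx : x ∈ ErdosSpace) : 0 ≤ x := coord_le_iff.2 fun i => by
  obtain ⟨n, hn⟩ := mem_iff.1 hx i
  rw [← hn]
  positivity

theorem exists_gt_norm_sub_lt {x : ℓ²(ℕ)} (hx : x ∈ ErdosSpace) {δ : ℝ} (hδ : 0 < δ) :
    ∃ y ∈ ErdosSpace, x < y ∧ ‖y - x‖ < δ := by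
  obtain ⟨n, hn⟩ := exists_nat_one_div_lt hδ
  -- raise a coordinate `x i < v := 1 / (n + 1)` to `v`
  set v : ℝ := 1 / (n + 1)
  have hv : 0 < v := by positivity
  obtain ⟨i, hi⟩ := exists_abs_lt x hv
  have hxi : 0 ≤ x i := nonneg hx i
  rw [abs_of_nonneg hxi] at hi
  set y := x + lp.single 2 i (v - x i)
  have hy : ∀ j, y j = if j = i then v else x j := by
    intro j
    split_ifs with hj
    · subst hj; simp [y]
    · simp [y, hj]
  refine ⟨y, mem_iff.2 fun j => ?_, lt_of_le_not_ge (coord_le_iff.2 fun j => ?_) fun hyx => ?_, ?_⟩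
  · rw [hy]
    split_ifs
    · exact ⟨n + 1, by simp [v]⟩
    · exact mem_iff.1 hx j
  · rw [hy]; split_ifs with hj
    · exact hj ▸ hi.le
    · exact le_rfl
  · have := coord_le_iff.1 hyx i
    rw [hy, if_pos rfl] at this
    linarith
  · rw [add_sub_cancel_left, lp.norm_single (by norm_num), Real.norm_of_nonneg (by linarith)]
    linarith

end ErdosSpace

/-- If `A` is a nonempty clopen subset of the complete Erdős space (with the subspace topology
from `ℓ²`), then the set of norms `{‖x‖ : x ∈ A}` is unbounded above. -/
theorem stmt1 (A : Set ↥ErdosSpace) (hA : IsClopen A) (hne : A.Nonempty) :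
    ∀ M : ℝ, ∃ x ∈ A, M < ‖(x : ↥ErdosSpace).val‖ := by
  intro M
  by_contra! hM
  obtain ⟨x₀, hx₀⟩ := hne
  have hclosed : IsClosed (Subtype.val '' A) :=
    ErdosSpace.isClosed.isClosedEmbedding_subtypeVal.isClosedMap _ hA.isClosed
  have hpos : ∀ x ∈ Subtype.val '' A, 0 ≤ x := by
    rintro _ ⟨x, -, rfl⟩
    exact ErdosSpace.nonneg x.2
  have hbdd : BddAbove (norm '' (Subtype.val '' A)) := by
    refine ⟨M, ?_⟩
    rintro _ ⟨_, ⟨x, hx, rfl⟩, rfl⟩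
    exact hM x hx
  obtain ⟨_, -, hmax⟩ := lp.exists_le_maximal_of_isClosed hclosed hpos hbdd (mem_image_of_mem _ hx₀)
  obtain ⟨m, hmA, rfl⟩ := hmax.prop
  obtain ⟨ε, hε, hball⟩ := Metric.isOpen_iff.1 hA.isOpen m hmA
  obtain ⟨y, hy, hmy, hyε⟩ := ErdosSpace.exists_gt_norm_sub_lt m.2 hε
  have hyA : (⟨y, hy⟩ : ErdosSpace) ∈ A := hball (by rwa [mem_ball, Subtype.dist_eq, dist_eq_norm])
  exact hmax.not_gt (mem_image_of_mem _ hyA) hmy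
end

section
/- For every real number r > 0 there exists a sequence y : ℕ → ℝ such that every term y_i is the reciprocal of a positive integer (y_i = 1/b_i for some b_i ∈ ℕ, b_i ≥ 1) and the series ∑_{i=0}^∞ y_i² converges with sum exactly r. -/
open Filter

noncomputable def stp (r : ℝ) : ℕ := ⌈Real.sqrt (1/r)⌉₊ + 1

noncomputable def emr (r : ℝ) : ℕ → ℝ
  | 0 => r
  | n+1 => emr r n - (1 / (stp (emr r n) : ℝ))^2

lemma stp_gt (r : ℝ) : Real.sqrt (1/r) < (stp r : ℝ) := by
  have := Nat.le_ceil (Real.sqrt (1/r))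
  have : (⌈Real.sqrt (1/r)⌉₊ : ℝ) ≥ Real.sqrt (1/r) := this
  simp only [stp]
  push_cast
  linarith

lemma term_lt (r : ℝ) (hr : 0 < r) : (1 / (stp r : ℝ))^2 < r := by
  have h1 : Real.sqrt (1/r) < (stp r : ℝ) := stp_gt r
  have h0 : (0:ℝ) ≤ Real.sqrt (1/r) := Real.sqrt_nonneg _
  have hb : (0:ℝ) < (stp r : ℝ) := lt_of_le_of_lt h0 h1
  have h2 : 1/r < (stp r : ℝ)^2 := by
    have := Real.sq_sqrt (by positivity : (0:ℝ) ≤ 1/r)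
    nlinarith
  rw [div_pow, one_pow, div_lt_iff₀ (by positivity)]
  rw [div_lt_iff₀ hr] at h2
  nlinarith

lemma stp_le (r ε : ℝ) (hε : 0 < ε) (h : ε ≤ r) :
    (stp r : ℝ) ≤ Real.sqrt (1/ε) + 2 := by
  have h1 : (⌈Real.sqrt (1/r)⌉₊ : ℝ) < Real.sqrt (1/r) + 1 :=
    Nat.ceil_lt_add_one (Real.sqrt_nonneg _)
  have h2 : Real.sqrt (1/r) ≤ Real.sqrt (1/ε) := by
    apply Real.sqrt_le_sqrt
    apply one_div_le_one_div_of_le hε h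
  simp only [stp]
  push_cast
  linarith

lemma term_ge (r ε : ℝ) (hε : 0 < ε) (h : ε ≤ r) :
    (1 / (Real.sqrt (1/ε) + 2))^2 ≤ (1 / (stp r : ℝ))^2 := by
  have h1 := stp_le r ε hε h
  have hb : (0:ℝ) < (stp r : ℝ) := by simp only [stp]; push_cast; positivity
  have h2 : (0:ℝ) < Real.sqrt (1/ε) + 2 := by positivity
  apply pow_le_pow_left₀ (by positivity)
  exact one_div_le_one_div_of_le hb h1

lemma emr_pos (r : ℝ) (hr : 0 < r) : ∀ n, 0 < emr r n := by
  intro n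
  induction n with
  | zero => exact hr
  | succ n ih =>
    have := term_lt (emr r n) ih
    simp only [emr]
    linarith

lemma emr_anti (r : ℝ) (hr : 0 < r) : ∀ m n, m ≤ n → emr r n ≤ emr r m := by
  intro m n h
  induction n with
  | zero => simp_all
  | succ n ih =>
    rcases Nat.lt_or_ge m (n+1) with h' | h'
    · have := ih (Nat.lt_succ_iff.mp h')
      have hp := emr_pos r hr n
      have : (0:ℝ) ≤ (1 / (stp (emr r n) : ℝ))^2 := by positivity
      simp only [emr]; linarith [ih (Nat.lt_succ_iff.mp h')]
    · have : m = n+1 := le_antisymm h h'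
      subst this; rfl

lemma emr_decay (r : ℝ) (hr : 0 < r) (ε : ℝ) (hε : 0 < ε) :
    ∀ n, ε < emr r n → emr r n ≤ r - n * (1 / (Real.sqrt (1/ε) + 2))^2 := by
  intro n
  induction n with
  | zero => simp [emr]
  | succ n ih =>
    intro h
    have hle : emr r (n+1) ≤ emr r n := emr_anti r hr n (n+1) (Nat.le_succ n)
    have hεn : ε < emr r n := lt_of_lt_of_le h hle
    have h1 := ih hεn
    have h2 := term_ge (emr r n) ε hε (le_of_lt hεn)
    simp only [emr]
    push_cast
    linarith

lemma emr_tendsto (r : ℝ) (hr : 0 < r) :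
    Tendsto (emr r) atTop (nhds 0) := by
  rw [Metric.tendsto_atTop]
  intro ε hε
  set δ := ε/2 with hδ
  have hδ0 : 0 < δ := by positivity
  set c := (1 / (Real.sqrt (1/δ) + 2))^2 with hc
  have hc0 : 0 < c := by positivity
  obtain ⟨N, hN⟩ := exists_nat_gt ((r - δ)/c)
  refine ⟨N, fun n hn => ?_⟩
  have hn' : ((r - δ)/c) < n := lt_of_lt_of_le hN (by exact_mod_cast hn)
  have hub : emr r n ≤ δ := by
    by_contra hcon
    push_neg at hcon
    have hd := emr_decay r hr δ hδ0 n hcon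
    rw [← hc] at hd
    have : (n:ℝ) * c ≤ r - emr r n := by linarith
    have h2 : (r - δ)/c * c < (n:ℝ) * c := by
      exact mul_lt_mul_of_pos_right hn' hc0
    rw [div_mul_cancel₀ _ (ne_of_gt hc0)] at h2
    linarith
  have hpos := emr_pos r hr n
  rw [Real.dist_eq, sub_zero, abs_of_pos hpos]
  linarith

/-- For every real `r > 0` there is a sequence `y` whose terms are reciprocals of positive
integers such that the series `∑ y_i²` converges with sum exactly `r`. -/
theorem stmt3 (r : ℝ) (hr : 0 < r) :
    ∃ y : ℕ → ℝ, (∀ i, ∃ b : ℕ, 1 ≤ b ∧ y i = 1 / (b : ℝ)) ∧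
      HasSum (fun i => (y i) ^ 2) r := by
  refine ⟨fun i => 1 / (stp (emr r i) : ℝ), fun i => ⟨stp (emr r i), Nat.le_add_left 1 _, rfl⟩, ?_⟩
  have hnn : ∀ i, 0 ≤ (1 / (stp (emr r i) : ℝ))^2 := fun i => by positivity
  rw [hasSum_iff_tendsto_nat_of_nonneg hnn]
  have key : ∀ n, ∑ i ∈ Finset.range n, (1 / (stp (emr r i) : ℝ))^2 = r - emr r n := by
    intro n
    induction n with
    | zero => simp [emr]
    | succ n ih =>
      rw [Finset.sum_range_succ, ih]
      simp only [emr]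
      ring
  simp only [key]
  have := emr_tendsto r hr
  have h2 : Tendsto (fun n => r - emr r n) atTop (nhds (r - 0)) :=
    tendsto_const_nhds.sub this
  simpa using h2
end

section
/- Let G be a subset of C × ℝ (a subspace of ℝ²) that is dense in C × ℝ and is a Gδ set in C × ℝ. Then the set D = {c ∈ C : G ∩ ({c} × ℝ) is a dense Gδ subset of {c} × ℝ} is a dense Gδ subset of C. -/
open Set Topology

/-- Rational-interval criterion for density in ℝ. -/
lemma dense_iff_rat (s : Set ℝ) :
    Dense s ↔ ∀ q q' : ℚ, (q : ℝ) < q' → (s ∩ Ioo (q : ℝ) (q' : ℝ)).Nonempty := by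
  constructor
  · intro hd q q' hlt
    rcases hd.inter_open_nonempty _ isOpen_Ioo (nonempty_Ioo.2 hlt) with ⟨x, hx, hxs⟩
    exact ⟨x, hxs, hx⟩
  · intro h
    rw [dense_iff_inter_open]
    intro U hU ⟨x, hx⟩
    rcases Metric.isOpen_iff.1 hU x hx with ⟨ε, hε, hball⟩
    rcases exists_rat_btwn (show x - ε < x by linarith) with ⟨q, hq1, hq2⟩
    rcases exists_rat_btwn (show x < x + ε by linarith) with ⟨q', hq3, hq4⟩
    rcases h q q' (hq2.trans hq3) with ⟨y, hys, hy1, hy2⟩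
    refine ⟨y, hball ?_, hys⟩
    rw [Metric.mem_ball, Real.dist_eq, abs_lt]
    constructor <;> linarith

/-- If `G` is a dense Gδ subset of `C × ℝ`, then the set of `c ∈ C` whose fiber
`G ∩ ({c} × ℝ)` is a dense Gδ subset of `{c} × ℝ` is a dense Gδ subset of `C`.
Fibers are identified with subsets of `ℝ`, and subsets of `C` (resp. of `C × ℝ`) are viewed
inside the subspace `↥C` (resp. `↥(C × ℝ)`) via preimage under the inclusion map. -/
theorem stmt4 (G : Set (ℝ × ℝ)) (hGsub : G ⊆ cantorSet ×ˢ (Set.univ : Set ℝ))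
    (hGdense : Dense (Subtype.val ⁻¹' G : Set ↥(cantorSet ×ˢ (Set.univ : Set ℝ))))
    (hGδ : IsGδ (Subtype.val ⁻¹' G : Set ↥(cantorSet ×ˢ (Set.univ : Set ℝ)))) :
    Dense (Subtype.val ⁻¹'
        {c : ℝ | c ∈ cantorSet ∧ Dense {r : ℝ | (c, r) ∈ G} ∧ IsGδ {r : ℝ | (c, r) ∈ G}} :
      Set ↥cantorSet) ∧
    IsGδ (Subtype.val ⁻¹'
        {c : ℝ | c ∈ cantorSet ∧ Dense {r : ℝ | (c, r) ∈ G} ∧ IsGδ {r : ℝ | (c, r) ∈ G}} :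
      Set ↥cantorSet) := by
  -- extract a sequence of open sets of ℝ × ℝ whose intersection agrees with G on C × ℝ
  obtain ⟨f, hfopen, hf⟩ := hGδ.eq_iInter_nat
  have hW : ∀ n, ∃ W : Set (ℝ × ℝ), IsOpen W ∧ f n = Subtype.val ⁻¹' W := fun n => by
    rcases isOpen_induced_iff.1 (hfopen n) with ⟨W, hWo, hWe⟩
    exact ⟨W, hWo, hWe.symm⟩
  choose W hWopen hWeq using hW
  -- pointwise description of G on C × ℝ
  have hmem : ∀ c r, c ∈ cantorSet → ((c, r) ∈ G ↔ ∀ n, (c, r) ∈ W n) := by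
    intro c r hc
    have hcr : (c, r) ∈ cantorSet ×ˢ (Set.univ : Set ℝ) := ⟨hc, trivial⟩
    have : (⟨(c, r), hcr⟩ : ↥(cantorSet ×ˢ (Set.univ : Set ℝ))) ∈
        (Subtype.val ⁻¹' G : Set ↥(cantorSet ×ˢ (Set.univ : Set ℝ))) ↔
        ∀ n, (c, r) ∈ W n := by
      rw [hf]
      simp only [mem_iInter]
      exact forall_congr' fun n => by rw [hWeq n]; rfl
    exact this
  -- the open approximations in ↥cantorSet
  set ι := ℕ × ℚ × ℚ
  set E : ι → Set ↥cantorSet := fun p =>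
    {x : ↥cantorSet | (p.2.1 : ℝ) < p.2.2 →
      ∃ r : ℝ, r ∈ Ioo (p.2.1 : ℝ) (p.2.2 : ℝ) ∧ ((x : ℝ), r) ∈ W p.1} with hE
  have hEopen : ∀ p, IsOpen (E p) := by
    rintro ⟨n, q, q'⟩
    by_cases hlt : (q : ℝ) < q'
    · have : E (n, q, q') = Subtype.val ⁻¹'
          (Prod.fst '' (W n ∩ (univ ×ˢ Ioo (q : ℝ) (q' : ℝ)))) := by
        ext x
        simp only [hE, mem_setOf_eq, mem_preimage, mem_image, mem_inter_iff, mem_prod,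
          mem_univ, true_and]
        constructor
        · intro h
          rcases h hlt with ⟨r, hr, hrW⟩
          exact ⟨((x : ℝ), r), ⟨hrW, hr⟩, rfl⟩
        · rintro ⟨⟨a, r⟩, ⟨hrW, hr⟩, rfl⟩ _
          exact ⟨r, hr, hrW⟩
      rw [this]
      exact (isOpenMap_fst _ ((hWopen n).inter (isOpen_univ.prod isOpen_Ioo))).preimage
        continuous_subtype_val
    · have : E (n, q, q') = univ := eq_univ_of_forall fun x => fun h => absurd h hlt
      rw [this]; exact isOpen_univ
  have hEdense : ∀ p, Dense (E p) := by
    rintro ⟨n, q, q'⟩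
    rw [dense_iff_inter_open]
    rintro U hU ⟨x, hx⟩
    by_cases hlt : (q : ℝ) < q'
    · rcases isOpen_induced_iff.1 hU with ⟨V, hVo, hVe⟩
      have hxV : (x : ℝ) ∈ V := by rw [← hVe] at hx; exact hx
      -- the open set V ×ˢ Ioo q q' meets G (via density of G in C × ℝ)
      have hopen : IsOpen (Subtype.val ⁻¹' (V ×ˢ Ioo (q : ℝ) (q' : ℝ)) :
          Set ↥(cantorSet ×ˢ (Set.univ : Set ℝ))) :=
        (hVo.prod isOpen_Ioo).preimage continuous_subtype_val
      have hne : (Subtype.val ⁻¹' (V ×ˢ Ioo (q : ℝ) (q' : ℝ)) :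
          Set ↥(cantorSet ×ˢ (Set.univ : Set ℝ))).Nonempty := by
        refine ⟨⟨((x : ℝ), ((q : ℝ) + q') / 2), x.2, trivial⟩, hxV, ?_, ?_⟩ <;>
          simp <;> linarith
      rcases hGdense.inter_open_nonempty _ hopen hne with ⟨p, hp1, hp2⟩
      have hcC : (p : ℝ × ℝ).1 ∈ cantorSet := p.2.1
      have hcV : (p : ℝ × ℝ).1 ∈ V := hp1.1
      have hrI : (p : ℝ × ℝ).2 ∈ Ioo (q : ℝ) (q' : ℝ) := hp1.2
      have hG : ((p : ℝ × ℝ).1, (p : ℝ × ℝ).2) ∈ G := hp2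
      refine ⟨⟨(p : ℝ × ℝ).1, hcC⟩, ?_, ?_⟩
      · rw [← hVe]; exact hcV
      · intro _
        exact ⟨(p : ℝ × ℝ).2, hrI, ((hmem _ _ hcC).1 hG) n⟩
    · exact ⟨x, hx, fun h => absurd h hlt⟩
  -- the target set equals the intersection of the E p
  have hkey : (Subtype.val ⁻¹'
      {c : ℝ | c ∈ cantorSet ∧ Dense {r : ℝ | (c, r) ∈ G} ∧ IsGδ {r : ℝ | (c, r) ∈ G}} :
      Set ↥cantorSet) = ⋂ p, E p := by
    ext x
    have hfib : {r : ℝ | ((x : ℝ), r) ∈ G} = ⋂ n, {r : ℝ | ((x : ℝ), r) ∈ W n} := by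
      ext r; simp only [mem_setOf_eq, mem_iInter]; exact hmem _ r x.2
    simp only [mem_preimage, mem_setOf_eq, mem_iInter]
    constructor
    · rintro ⟨-, hdense, -⟩ ⟨n, q, q'⟩ hlt
      have hWd : Dense {r : ℝ | ((x : ℝ), r) ∈ W n} := by
        refine hdense.mono ?_
        intro r hr
        exact (hmem _ r x.2).1 hr n
      rcases (dense_iff_rat _).1 hWd q q' hlt with ⟨r, hrW, hr⟩
      exact ⟨r, hr, hrW⟩
    · intro h
      have hWd : ∀ n, Dense {r : ℝ | ((x : ℝ), r) ∈ W n} := by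
        intro n
        rw [dense_iff_rat]
        intro q q' hlt
        rcases h (n, q, q') hlt with ⟨r, hr, hrW⟩
        exact ⟨r, hrW, hr⟩
      have hWo : ∀ n, IsOpen {r : ℝ | ((x : ℝ), r) ∈ W n} := fun n =>
        (hWopen n).preimage (Continuous.prodMk_right _)
      refine ⟨x.2, ?_, ?_⟩
      · rw [hfib]; exact dense_iInter_of_isOpen hWo hWd
      · rw [hfib]; exact .iInter fun n => (hWo n).isGδ
  -- Baire category in the Cantor set
  have : CompleteSpace ↥cantorSet := isClosed_cantorSet.completeSpace_coe
  rw [hkey]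
  exact ⟨dense_iInter_of_isOpen hEopen hEdense, .iInter fun p => (hEopen p).isGδ⟩
end

section
/- With f and F as defined: (i) F ⊆ C × ℝ, and for every c ∈ C \ D, the fiber F ∩ ({c} × ℝ) is exactly the singleton {(c, f(c))}; (ii) for every n ∈ ℕ, the fiber F ∩ ({d_n} × ℝ) is exactly the two-point set {(d_n, f(d_n)), (d_n, f(d_n) + a_n)}. -/
set_option maxHeartbeats 1000000

/-- `c` is a non-endpoint of the Cantor set: `c ∈ C` and for every `ε > 0` both
`(c - ε, c) ∩ C` and `(c, c + ε) ∩ C` are nonempty. -/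
def IsNonEndpoint (c : ℝ) : Prop :=
  c ∈ cantorSet ∧ ∀ ε > 0,
    (Set.Ioo (c - ε) c ∩ cantorSet).Nonempty ∧ (Set.Ioo c (c + ε) ∩ cantorSet).Nonempty

/-- `f(c) = ∑_{n : d n < c} a n`. -/
noncomputable def fFun (d a : ℕ → ℝ) (c : ℝ) : ℝ := ∑' n, if d n < c then a n else 0

/-- `F`, the closure in `ℝ²` of the graph `{(c, f c) : c ∈ C}`. -/
noncomputable def Fset (d a : ℕ → ℝ) : Set (ℝ × ℝ) :=
  closure {p : ℝ × ℝ | ∃ c ∈ cantorSet, p = (c, fFun d a c)}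

namespace Stmt5Aux

/-- `g(c) = ∑_{n : d n ≤ c} a n`, the right limit of `f` at `c`. -/
noncomputable def g (d a : ℕ → ℝ) (c : ℝ) : ℝ := ∑' n, if d n ≤ c then a n else 0

variable {d a : ℕ → ℝ}

lemma ite_nonneg (ha : ∀ n, 0 < a n) (P : ℕ → Prop) [DecidablePred P] (n : ℕ) :
    0 ≤ if P n then a n else 0 := by split <;> simp [(ha _).le]

lemma summable_ite (ha : ∀ n, 0 < a n) (hs : Summable a) (P : ℕ → Prop) [DecidablePred P] :
    Summable (fun n => if P n then a n else 0) :=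
  hs.of_nonneg_of_le (fun n => by by_cases h : P n <;> simp [h, (ha n).le])
    (fun n => by by_cases h : P n <;> simp [h, (ha n).le])

lemma f_mono (ha : ∀ n, 0 < a n) (hs : Summable a) : Monotone (fFun d a) := by
  intro x y hxy
  refine Summable.tsum_le_tsum (fun n => ?_) (summable_ite ha hs (fun n => d n < x))
    (summable_ite ha hs (fun n => d n < y))
  by_cases h : d n < x
  · simp [h, lt_of_lt_of_le h hxy]
  · simp only [h, if_false]
    split <;> simp [(ha _).le]

lemma f_le_g (ha : ∀ n, 0 < a n) (hs : Summable a) (c : ℝ) : fFun d a c ≤ g d a c := by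
  refine Summable.tsum_le_tsum (fun n => ?_) (summable_ite ha hs (fun n => d n < c))
    (summable_ite ha hs (fun n => d n ≤ c))
  by_cases h : d n < c
  · simp [h, h.le]
  · simp only [h, if_false]
    split <;> simp [(ha _).le]

lemma g_le_f_of_lt (ha : ∀ n, 0 < a n) (hs : Summable a) {c x : ℝ} (h : c < x) :
    g d a c ≤ fFun d a x := by
  refine Summable.tsum_le_tsum (fun n => ?_) (summable_ite ha hs (fun n => d n ≤ c))
    (summable_ite ha hs (fun n => d n < x))
  by_cases hn : d n ≤ c
  · simp [hn, lt_of_le_of_lt hn h]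
  · simp only [hn, if_false]
    split <;> simp [(ha _).le]

lemma f_nonneg (ha : ∀ n, 0 < a n) (c : ℝ) : 0 ≤ fFun d a c :=
  tsum_nonneg fun n => by split <;> simp [(ha _).le]

lemma left_approx (ha : ∀ n, 0 < a n) (hs : Summable a) (c : ℝ) {ε : ℝ} (hε : 0 < ε) :
    ∃ δ > 0, ∀ x, c - δ < x → fFun d a c - ε < fFun d a x := by
  have hsc := summable_ite ha hs (fun n => d n < c)
  have ht := hsc.hasSum.tendsto_sum_nat
  obtain ⟨N, hN⟩ :=
    (ht.eventually (eventually_gt_nhds (show fFun d a c - ε < fFun d a c by linarith))).exists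
  set s := (Finset.range N).filter (fun n => d n < c) with hsdef
  have hsum_s : ∑ n ∈ Finset.range N, (if d n < c then a n else 0) = ∑ n ∈ s, a n := by
    rw [hsdef, Finset.sum_filter]
  rw [hsum_s] at hN
  by_cases hne : s.Nonempty
  · refine ⟨s.inf' hne (fun n => c - d n), ?_, ?_⟩
    · rw [gt_iff_lt, Finset.lt_inf'_iff]
      intro n hn
      have : d n < c := (Finset.mem_filter.mp hn).2
      linarith
    · intro x hx
      have hsx : ∀ n ∈ s, d n < x := by
        intro n hn
        have h1 : s.inf' hne (fun n => c - d n) ≤ c - d n := Finset.inf'_le _ hn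
        linarith
      have : ∑ n ∈ s, a n ≤ fFun d a x := by
        have := Summable.sum_le_tsum (f := fun n => if d n < x then a n else 0) s
          (fun n _ => ite_nonneg ha (fun n => d n < x) n) (summable_ite ha hs (fun n => d n < x))
        calc ∑ n ∈ s, a n = ∑ n ∈ s, (if d n < x then a n else 0) :=
              (Finset.sum_congr rfl fun n hn => by simp [hsx n hn]).symm
          _ ≤ fFun d a x := this
      linarith
  · refine ⟨1, one_pos, fun x _ => ?_⟩
    rw [Finset.not_nonempty_iff_eq_empty.mp hne, Finset.sum_empty] at hN
    have := f_nonneg (d := d) ha x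
    linarith

lemma right_approx (ha : ∀ n, 0 < a n) (hs : Summable a) (c : ℝ) {ε : ℝ} (hε : 0 < ε) :
    ∃ δ > 0, ∀ x, c < x → x < c + δ → fFun d a x < g d a c + ε := by
  have ht := hs.hasSum.tendsto_sum_nat
  obtain ⟨N, hN⟩ :=
    (ht.eventually (eventually_gt_nhds (show (∑' n, a n) - ε < ∑' n, a n by linarith))).exists
  have htail : ∑' (n : ↑((↑(Finset.range N) : Set ℕ))ᶜ), a ↑n < ε := by
    have h := Summable.sum_add_tsum_compl (s := Finset.range N) hs
    linarith
  set s := (Finset.range N).filter (fun n => c < d n) with hsdef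
  set δ : ℝ := if hne : s.Nonempty then s.inf' hne (fun n => d n - c) else 1 with hδdef
  have hδpos : 0 < δ := by
    rw [hδdef]
    split
    · rename_i hne
      rw [Finset.lt_inf'_iff]
      intro n hn
      have : c < d n := (Finset.mem_filter.mp hn).2
      linarith
    · exact one_pos
  refine ⟨δ, hδpos, fun x hcx hxδ => ?_⟩
  have hle : ∀ n ∈ Finset.range N, (if d n < x then a n else 0) ≤ (if d n ≤ c then a n else 0) := by
    intro n hn
    by_cases h1 : d n ≤ c
    · simp only [h1, if_true]
      split <;> simp [(ha _).le]
    · have hns : n ∈ s := Finset.mem_filter.mpr ⟨hn, not_le.mp h1⟩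
      have hδn : δ ≤ d n - c := by
        rw [hδdef]
        rw [dif_pos ⟨n, hns⟩]
        exact Finset.inf'_le _ hns
      have : ¬ d n < x := by intro h; linarith
      simp [this, h1]
  have hsplit := Summable.sum_add_tsum_compl (s := Finset.range N) (summable_ite ha hs (fun n => d n < x))
  have hb1 : ∑ n ∈ Finset.range N, (if d n < x then a n else 0)
      ≤ ∑ n ∈ Finset.range N, (if d n ≤ c then a n else 0) := Finset.sum_le_sum hle
  have hb2 : ∑ n ∈ Finset.range N, (if d n ≤ c then a n else 0) ≤ g d a c :=
    Summable.sum_le_tsum _ (fun n _ => ite_nonneg ha (fun n => d n ≤ c) n) (summable_ite ha hs (fun n => d n ≤ c))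
  have hb3 : ∑' (n : ↑((↑(Finset.range N) : Set ℕ))ᶜ), (if d ↑n < x then a ↑n else 0)
      ≤ ∑' (n : ↑((↑(Finset.range N) : Set ℕ))ᶜ), a ↑n := by
    refine Summable.tsum_le_tsum (fun n => ?_) ((summable_ite ha hs (fun n => d n < x)).subtype _) (hs.subtype _)
    split <;> simp [(ha _).le]
  have heq : fFun d a x = ∑ n ∈ Finset.range N, (if d n < x then a n else 0)
      + ∑' (n : ↑((↑(Finset.range N) : Set ℕ))ᶜ), (if d ↑n < x then a ↑n else 0) := hsplit.symm
  rw [heq]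
  linarith

lemma g_eq_of_notMem {c : ℝ} (hc : c ∉ Set.range d) : g d a c = fFun d a c :=
  tsum_congr fun n => by
    have hne : d n ≠ c := fun h => hc ⟨n, h⟩
    by_cases h : d n < c
    · simp [h, h.le]
    · have h2 : ¬ d n ≤ c := fun hle => h (hle.lt_of_ne hne)
      simp [h, h2]

lemma g_eq_add (hd_inj : Function.Injective d) (ha : ∀ n, 0 < a n) (hs : Summable a) (m : ℕ) :
    g d a (d m) = fFun d a (d m) + a m := by
  have key : ∀ n, (if d n ≤ d m then a n else 0)
      = (if d n < d m then a n else 0) + (if n = m then a n else 0) := by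
    intro n
    rcases lt_trichotomy (d n) (d m) with h | h | h
    · have hnm : n ≠ m := fun e => by rw [e] at h; exact lt_irrefl _ h
      simp [h.le, h, hnm]
    · have hnm : n = m := hd_inj h
      subst hnm
      simp [h.le, lt_irrefl]
    · have hnm : n ≠ m := fun e => by rw [e] at h; exact lt_irrefl _ h
      simp [not_le.mpr h, not_lt.mpr h.le, hnm]
  have hlast : ∑' n, (if n = m then a n else 0) = a m := by
    rw [tsum_eq_single m] <;> simp +contextual
  rw [g, tsum_congr key, Summable.tsum_add (summable_ite ha hs (fun n => d n < d m)) (summable_ite ha hs (fun n => n = m)), hlast]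
  rfl

lemma Fsubset : Fset d a ⊆ cantorSet ×ˢ (Set.univ : Set ℝ) := by
  refine closure_minimal ?_ (isClosed_cantorSet.prod isClosed_univ)
  rintro p ⟨c, hc, rfl⟩
  exact ⟨hc, trivial⟩

lemma graph_mem {c : ℝ} (hc : c ∈ cantorSet) : (c, fFun d a c) ∈ Fset d a :=
  subset_closure ⟨c, hc, rfl⟩

lemma mem_fiber (ha : ∀ n, 0 < a n) (hs : Summable a) {c y : ℝ}
    (h : (c, y) ∈ Fset d a) : y = fFun d a c ∨ y = g d a c := by
  by_contra hy
  push_neg at hy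
  obtain ⟨h1, h2⟩ := hy
  set ε := min |y - fFun d a c| |y - g d a c| / 2 with hεdef
  have hε : 0 < ε := by
    have e1 : 0 < |y - fFun d a c| := abs_pos.mpr (sub_ne_zero.mpr h1)
    have e2 : 0 < |y - g d a c| := abs_pos.mpr (sub_ne_zero.mpr h2)
    rw [hεdef]
    have := lt_min e1 e2
    positivity
  have hεle1 : 2 * ε ≤ |y - fFun d a c| := by
    have := min_le_left |y - fFun d a c| |y - g d a c|
    rw [hεdef]; linarith
  have hεle2 : 2 * ε ≤ |y - g d a c| := by
    have := min_le_right |y - fFun d a c| |y - g d a c|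
    rw [hεdef]; linarith
  obtain ⟨δ1, hδ1, H1⟩ := left_approx ha hs c hε
  obtain ⟨δ2, hδ2, H2⟩ := right_approx (d := d) ha hs c hε
  rw [Fset, Metric.mem_closure_iff] at h
  obtain ⟨p, hp, hdist⟩ := h (min (min δ1 δ2) ε) (by positivity)
  obtain ⟨x, hx, rfl⟩ := hp
  rw [Prod.dist_eq, max_lt_iff] at hdist
  obtain ⟨hdx, hdy⟩ := hdist
  dsimp only at hdx hdy
  rw [Real.dist_eq, abs_sub_lt_iff] at hdx
  rw [Real.dist_eq] at hdy
  have hmin1 : min (min δ1 δ2) ε ≤ δ1 := le_trans (min_le_left _ _) (min_le_left _ _)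
  have hmin2 : min (min δ1 δ2) ε ≤ δ2 := le_trans (min_le_left _ _) (min_le_right _ _)
  have hmin3 : min (min δ1 δ2) ε ≤ ε := min_le_right _ _
  have hdy' : |y - fFun d a x| < ε := lt_of_lt_of_le hdy hmin3
  rcases le_or_gt x c with hxc | hxc
  · have hlb : fFun d a c - ε < fFun d a x := H1 x (by linarith [hdx.1])
    have hub : fFun d a x ≤ fFun d a c := f_mono ha hs hxc
    have hmid : |fFun d a x - fFun d a c| < ε := by
      rw [abs_sub_lt_iff]; constructor <;> linarith
    have htri : |y - fFun d a c| ≤ |y - fFun d a x| + |fFun d a x - fFun d a c| :=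
      abs_sub_le _ _ _
    linarith
  · have hlb : g d a c ≤ fFun d a x := g_le_f_of_lt ha hs hxc
    have hub : fFun d a x < g d a c + ε := H2 x hxc (by linarith [hdx.2])
    have hmid : |fFun d a x - g d a c| < ε := by
      rw [abs_sub_lt_iff]; constructor <;> linarith
    have htri : |y - g d a c| ≤ |y - fFun d a x| + |fFun d a x - g d a c| :=
      abs_sub_le _ _ _
    linarith

lemma right_point_mem (ha : ∀ n, 0 < a n) (hs : Summable a)
    (hd_ne : ∀ n, IsNonEndpoint (d n)) (m : ℕ) : (d m, g d a (d m)) ∈ Fset d a := by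
  rw [Fset, Metric.mem_closure_iff]
  intro ε hε
  obtain ⟨δ, hδ, H⟩ := right_approx ha hs (d m) (half_pos hε)
  obtain ⟨x, hx⟩ := ((hd_ne m).2 (min δ (ε / 2)) (by positivity)).2
  obtain ⟨⟨hx1, hx2⟩, hxC⟩ := hx
  refine ⟨(x, fFun d a x), ⟨x, hxC, rfl⟩, ?_⟩
  rw [Prod.dist_eq, max_lt_iff]
  constructor
  · rw [Real.dist_eq, abs_sub_lt_iff]
    have : min δ (ε / 2) ≤ ε / 2 := min_le_right _ _
    constructor <;> linarith
  · rw [Real.dist_eq, abs_sub_lt_iff]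
    have hm : min δ (ε / 2) ≤ δ := min_le_left _ _
    have h1 : g d a (d m) ≤ fFun d a x := g_le_f_of_lt ha hs hx1
    have h2 : fFun d a x < g d a (d m) + ε / 2 := H x hx1 (by linarith)
    constructor <;> linarith

end Stmt5Aux

open Stmt5Aux in
/-- With `f` and `F` as above: (i) `F ⊆ C × ℝ` and for `c ∈ C \ D` the fiber of `F` over `c`
is exactly `{(c, f c)}`; (ii) for each `n` the fiber of `F` over `d n` is exactly
`{(d n, f (d n)), (d n, f (d n) + a n)}`. -/
theorem stmt5 (d a : ℕ → ℝ) (hd_inj : Function.Injective d)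
    (hd_ne : ∀ n, IsNonEndpoint (d n)) (hd_dense : cantorSet ⊆ closure (Set.range d))
    (ha_pos : ∀ n, 0 < a n) (ha_sum : ∑' n, a n = 1) :
    Fset d a ⊆ cantorSet ×ˢ (Set.univ : Set ℝ) ∧
    (∀ c ∈ cantorSet \ Set.range d,
      Fset d a ∩ ({c} ×ˢ (Set.univ : Set ℝ)) = {(c, fFun d a c)}) ∧
    (∀ n : ℕ, Fset d a ∩ ({d n} ×ˢ (Set.univ : Set ℝ)) =
      {(d n, fFun d a (d n)), (d n, fFun d a (d n) + a n)}) := by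
  have hs : Summable a := by
    by_contra h
    rw [tsum_eq_zero_of_not_summable h] at ha_sum
    norm_num at ha_sum
  refine ⟨Fsubset, ?_, ?_⟩
  · rintro c ⟨hcC, hcD⟩
    ext ⟨x, y⟩
    simp only [Set.mem_inter_iff, Set.mem_prod, Set.mem_singleton_iff, Set.mem_univ, and_true,
      Prod.mk.injEq]
    constructor
    · rintro ⟨hF, rfl⟩
      refine ⟨rfl, ?_⟩
      rcases mem_fiber ha_pos hs hF with h | h
      · exact h
      · rw [g_eq_of_notMem hcD] at h; exact h
    · rintro ⟨rfl, rfl⟩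
      exact ⟨graph_mem hcC, rfl⟩
  · intro n
    ext ⟨x, y⟩
    simp only [Set.mem_inter_iff, Set.mem_prod, Set.mem_singleton_iff, Set.mem_univ, and_true,
      Set.mem_insert_iff, Prod.mk.injEq]
    constructor
    · rintro ⟨hF, rfl⟩
      rcases mem_fiber ha_pos hs hF with h | h
      · exact Or.inl ⟨rfl, h⟩
      · rw [g_eq_add hd_inj ha_pos hs n] at h
        exact Or.inr ⟨rfl, h⟩
    · rintro (⟨rfl, rfl⟩ | ⟨rfl, rfl⟩)
      · exact ⟨graph_mem (hd_ne n).1, rfl⟩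
      · refine ⟨?_, rfl⟩
        have := right_point_mem ha_pos hs hd_ne n
        rwa [g_eq_add hd_inj ha_pos hs n] at this
end

section
/- The function f is non-decreasing on C, and f is continuous at a point c ∈ C if and only if c ∉ D; that is, the set of discontinuities of f : C → ℝ is exactly D = {d_n : n ∈ ℕ}. -/
/-!
`f` is a sum of step functions `x ↦ a n · 1[d n < x]`. Away from `D` every step is locally
constant and the series converges uniformly (Weierstrass M-test), so `f` is continuous there.
At `d m` the function jumps by at least `a m > 0` to the right, and since `d m` is a
non-endpoint, points of `C` approach it from the right, so `f|_C` is discontinuous at `d m`.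
-/

open Set Filter Topology

theorem TendstoUniformly.continuousAt {ι α β : Type*} [TopologicalSpace α] [UniformSpace β]
    {F : ι → α → β} {f : α → β} {p : Filter ι} {x : α} (h : TendstoUniformly F f p)
    (hF : ∃ᶠ i in p, ContinuousAt (F i) x) : ContinuousAt f x :=
  continuousAt_of_locally_uniform_approx_of_continuousAt fun u hu =>
    let ⟨i, hFi, hi⟩ := (hF.and_eventually (h u hu)).exists
    ⟨univ, univ_mem, F i, hFi, fun y _ => hi y⟩

theorem continuousAt_tsum {α β F : Type*} [TopologicalSpace β] [NormedAddCommGroup F]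
    [CompleteSpace F] {f : α → β → F} {u : α → ℝ} {x : β} (hf : ∀ i, ContinuousAt (f i) x)
    (hu : Summable u) (hfu : ∀ n y, ‖f n y‖ ≤ u n) :
    ContinuousAt (fun y => ∑' n, f n y) x :=
  (tendstoUniformly_tsum hu hfu).continuousAt
    (Frequently.of_forall fun t => tendsto_finsetSum t fun i _ => hf i)

theorem continuousAt_ite_lt {X Y : Type*} [TopologicalSpace X] [LinearOrder X] [OrderTopology X]
    [TopologicalSpace Y] {t c : X} (h : t ≠ c) (y z : Y) :
    ContinuousAt (fun x => if t < x then y else z) c := by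
  rcases h.lt_or_gt with h | h
  · exact continuousAt_const.congr ((eventually_gt_nhds h).mono fun x hx => (if_pos hx).symm)
  · exact continuousAt_const.congr
      ((eventually_lt_nhds h).mono fun x hx => (if_neg hx.not_gt).symm)

section JumpFunction

variable {d a : ℕ → ℝ}

theorem summable_ite_lt (hA : Summable a) (x : ℝ) :
    Summable fun n => if d n < x then a n else 0 :=
  hA.indicator {n | d n < x}

theorem ite_lt_mono (ha : 0 ≤ a) (n : ℕ) {x y : ℝ} (hxy : x ≤ y) :
    (if d n < x then a n else 0) ≤ if d n < y then a n else 0 := by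
  split_ifs with hx hy
  exacts [le_rfl, absurd (hx.trans_le hxy) hy, ha n, le_rfl]

theorem fFun_mono (ha : 0 ≤ a) (hA : Summable a) : Monotone (fFun d a) := fun x y hxy =>
  Summable.tsum_le_tsum (fun n => ite_lt_mono ha n hxy) (summable_ite_lt hA x)
    (summable_ite_lt hA y)

theorem fFun_add_le_of_lt (ha : 0 ≤ a) (hA : Summable a) {m : ℕ} {x : ℝ} (hx : d m < x) :
    fFun d a (d m) + a m ≤ fFun d a x := by
  have hjump : a m ≤ fFun d a x - fFun d a (d m) := by
    rw [fFun, fFun, ← (summable_ite_lt hA x).tsum_sub (summable_ite_lt hA (d m))]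
    refine le_of_eq_of_le ?_ (((summable_ite_lt hA x).sub (summable_ite_lt hA (d m))).le_tsum m
      fun n _ => sub_nonneg.2 (ite_lt_mono ha n hx.le))
    simp [hx]
  linarith

theorem continuousAt_fFun (hA : Summable a) {c : ℝ} (hc : c ∉ range d) :
    ContinuousAt (fFun d a) c :=
  continuousAt_tsum (fun n => continuousAt_ite_lt (fun h => hc ⟨n, h⟩) _ _) hA.abs
    fun n x => by split_ifs <;> simp

theorem not_continuousWithinAt_fFun (ha : 0 ≤ a) (hA : Summable a) {s : Set ℝ} {m : ℕ}
    (ham : 0 < a m) (hs : d m ∈ closure (s ∩ Ioi (d m))) :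
    ¬ContinuousWithinAt (fFun d a) s (d m) := by
  intro hcont
  have := mem_closure_iff_nhdsWithin_neBot.mp hs
  have hlim : Tendsto (fFun d a) (𝓝[s ∩ Ioi (d m)] (d m)) (𝓝 (fFun d a (d m))) :=
    hcont.mono inter_subset_left
  have hjump : ∀ᶠ x in 𝓝[s ∩ Ioi (d m)] (d m), fFun d a (d m) + a m ≤ fFun d a x :=
    eventually_mem_nhdsWithin.mono fun x hx => fFun_add_le_of_lt ha hA hx.2
  linarith [ge_of_tendsto hlim hjump]

end JumpFunction

theorem IsNonEndpoint.mem_closure_inter_Ioi {c : ℝ} (hc : IsNonEndpoint c) :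
    c ∈ closure (cantorSet ∩ Ioi c) := by
  rw [Metric.mem_closure_iff]
  intro ε hε
  obtain ⟨y, ⟨hcy, hyc⟩, hy⟩ := (hc.2 ε hε).2
  exact ⟨y, ⟨hy, hcy⟩, by rw [Real.dist_eq, abs_sub_lt_iff]; constructor <;> linarith⟩

theorem stmt6_general (d a : ℕ → ℝ) (hd_ne : ∀ n, IsNonEndpoint (d n))
    (ha_pos : ∀ n, 0 < a n) (ha_sum : ∑' n, a n = 1) :
    MonotoneOn (fFun d a) cantorSet ∧
    ∀ c ∈ cantorSet, (ContinuousWithinAt (fFun d a) cantorSet c ↔ c ∉ Set.range d) := by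
  have hA : Summable a := by
    by_contra h
    simp [tsum_eq_zero_of_not_summable h] at ha_sum
  have ha : 0 ≤ a := fun n => (ha_pos n).le
  refine ⟨(fFun_mono ha hA).monotoneOn _, fun c _ => ⟨?_, fun hc =>
    (continuousAt_fFun hA hc).continuousWithinAt⟩⟩
  rintro hcont ⟨m, rfl⟩
  exact not_continuousWithinAt_fFun ha hA (ha_pos m) (hd_ne m).mem_closure_inter_Ioi hcont

/-- `f` is non-decreasing on `C`, and `f` (as a function on the subspace `C ⊆ ℝ`) is
continuous at `c ∈ C` if and only if `c ∉ D = {d n : n ∈ ℕ}`. -/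
theorem stmt6 (d a : ℕ → ℝ) (hd_inj : Function.Injective d)
    (hd_ne : ∀ n, IsNonEndpoint (d n)) (hd_dense : cantorSet ⊆ closure (Set.range d))
    (ha_pos : ∀ n, 0 < a n) (ha_sum : ∑' n, a n = 1) :
    MonotoneOn (fFun d a) cantorSet ∧
    ∀ c ∈ cantorSet, (ContinuousWithinAt (fFun d a) cantorSet c ↔ c ∉ Set.range d) :=
  stmt6_general d a hd_ne ha_pos ha_sum
end

section
/- Let U be a relatively open subset of C and let V = (a, b) be a nonempty open interval in ℝ, and give S = (U × V) \ F the subspace topology from ℝ². Then for every c ∈ U and every point p ∈ ({c} × V) \ F, the set ({c} × V) \ F is the quasi-component of p in S, i.e., ({c} × V) \ F equals the intersection of all clopen subsets of S that contain p. -/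
open Filter Topology Set

/-- The right limit `f(c⁺)` of `fFun d a` at `c`. -/
noncomputable def fFunRight (d a : ℕ → ℝ) (c : ℝ) : ℝ := ∑' n, if d n ≤ c then a n else 0

section Series

variable {a : ℕ → ℝ}

lemma summable_ite (ha : Summable a) (P : ℕ → Prop) [DecidablePred P] :
    Summable fun n => if P n then a n else 0 :=
  ha.norm.of_norm_bounded fun n => by split_ifs <;> simp

lemma tsum_ite_le_tsum_ite (ha : ∀ n, 0 ≤ a n) (hsum : Summable a) {P Q : ℕ → Prop}
    [DecidablePred P] [DecidablePred Q] (hPQ : ∀ n, P n → Q n) :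
    (∑' n, if P n then a n else 0) ≤ ∑' n, if Q n then a n else 0 :=
  Summable.tsum_le_tsum (fun n => by split_ifs <;> simp_all)
    (summable_ite hsum P) (summable_ite hsum Q)

lemma tsum_ite_lt_tsum_ite (ha : ∀ n, 0 ≤ a n) (hsum : Summable a) {P Q : ℕ → Prop}
    [DecidablePred P] [DecidablePred Q] (hPQ : ∀ n, P n → Q n) {m : ℕ} (ham : 0 < a m)
    (hPm : ¬ P m) (hQm : Q m) : (∑' n, if P n then a n else 0) < ∑' n, if Q n then a n else 0 :=
  Summable.tsum_lt_tsum (i := m) (fun n => by split_ifs <;> simp_all)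
    (by simp [hPm, hQm, ham]) (summable_ite hsum P) (summable_ite hsum Q)

lemma tendsto_tsum_ite {α : Type*} {l : Filter α} (hsum : Summable a) {P : ℕ → α → Prop}
    [∀ n x, Decidable (P n x)] {Q : ℕ → Prop} [DecidablePred Q]
    (h : ∀ n, ∀ᶠ x in l, P n x ↔ Q n) :
    Tendsto (fun x => ∑' n, if P n x then a n else 0) l (𝓝 (∑' n, if Q n then a n else 0)) :=
  tendsto_tsum_of_dominated_convergence hsum.norm
    (fun n => tendsto_const_nhds.congr' ((h n).mono fun x hx => by simp only [hx]))
    (Eventually.of_forall fun x n => by split_ifs <;> simp)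

end Series

section Staircase

variable {d a : ℕ → ℝ}

lemma fFun_le_fFunRight (ha : ∀ n, 0 ≤ a n) (hsum : Summable a) (x : ℝ) :
    fFun d a x ≤ fFunRight d a x :=
  tsum_ite_le_tsum_ite ha hsum fun _ => le_of_lt

lemma fFunRight_le_fFun (ha : ∀ n, 0 ≤ a n) (hsum : Summable a) {x y : ℝ} (hxy : x < y) :
    fFunRight d a x ≤ fFun d a y :=
  tsum_ite_le_tsum_ite ha hsum fun _ hn => hn.trans_lt hxy

lemma fFun_lt_fFunRight (ha : ∀ n, 0 ≤ a n) (hsum : Summable a) {m : ℕ} (ham : 0 < a m) :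
    fFun d a (d m) < fFunRight d a (d m) :=
  tsum_ite_lt_tsum_ite ha hsum (fun _ => le_of_lt) ham (lt_irrefl _) le_rfl

lemma fFunRight_eq_fFun {x : ℝ} (hx : x ∉ range d) : fFunRight d a x = fFun d a x :=
  tsum_congr fun n => by simp only [(show d n ≠ x from fun h => hx ⟨n, h⟩).le_iff_lt]

lemma tendsto_fFun_nhdsLE (hsum : Summable a) (x : ℝ) :
    Tendsto (fFun d a) (𝓝[≤] x) (𝓝 (fFun d a x)) :=
  tendsto_tsum_ite hsum fun n => by
    rcases lt_or_ge (d n) x with h | h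
    · exact (eventually_nhdsWithin_of_eventually_nhds (eventually_gt_nhds h)).mono
        fun y hy => iff_of_true hy h
    · exact eventually_mem_nhdsWithin.mono fun y (hy : y ≤ x) =>
        iff_of_false (not_lt.2 (hy.trans h)) (not_lt.2 h)

lemma tendsto_fFun_nhdsGT (hsum : Summable a) (x : ℝ) :
    Tendsto (fFun d a) (𝓝[>] x) (𝓝 (fFunRight d a x)) :=
  tendsto_tsum_ite hsum fun n => by
    rcases le_or_gt (d n) x with h | h
    · exact eventually_mem_nhdsWithin.mono fun y (hy : x < y) => iff_of_true (h.trans_lt hy) h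
    · exact (eventually_nhdsWithin_of_eventually_nhds (eventually_lt_nhds h)).mono
        fun y hy => iff_of_false (not_lt.2 hy.le) (not_le.2 h)

lemma tendsto_fFun_nhds_of_notMem (hsum : Summable a) {x : ℝ} (hx : x ∉ range d) :
    Tendsto (fFun d a) (𝓝 x) (𝓝 (fFun d a x)) :=
  tendsto_tsum_ite hsum fun n => by
    rcases (show d n ≠ x from fun h => hx ⟨n, h⟩).lt_or_gt with h | h
    · exact (eventually_gt_nhds h).mono fun y hy => iff_of_true hy h
    · exact (eventually_lt_nhds h).mono fun y hy => iff_of_false (not_lt.2 hy.le) (not_lt.2 h.le)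

lemma tendsto_fFunRight_nhds_of_notMem (hsum : Summable a) {x : ℝ} (hx : x ∉ range d) :
    Tendsto (fFunRight d a) (𝓝 x) (𝓝 (fFun d a x)) :=
  tendsto_tsum_ite hsum fun n => by
    rcases (show d n ≠ x from fun h => hx ⟨n, h⟩).lt_or_gt with h | h
    · exact (eventually_gt_nhds h).mono fun y hy => iff_of_true hy.le h
    · exact (eventually_lt_nhds h).mono fun y hy => iff_of_false (not_le.2 hy) (not_lt.2 h.le)

end Staircase

lemma eq_of_mk_mem_closure_image_graph {X Y : Type*} [TopologicalSpace X] [TopologicalSpace Y]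
    [T2Space Y] {g : X → Y} {s : Set X} {x : X} {y L : Y} (hg : Tendsto g (𝓝[s] x) (𝓝 L))
    (h : (x, y) ∈ closure ((fun c => (c, g c)) '' s)) : y = L := by
  by_contra hne
  obtain ⟨V, V', hV, hV', hyV, hLV', hVV'⟩ := t2_separation hne
  obtain ⟨O, hO, hxO, hOs⟩ := mem_nhdsWithin.1 (hg (hV'.mem_nhds hLV'))
  obtain ⟨_, ⟨hcO, hcV⟩, c, hc, rfl⟩ := mem_closure_iff.1 h (O ×ˢ V) (hO.prod hV) ⟨hxO, hyV⟩
  exact hVV'.le_bot ⟨hcV, hOs ⟨hcO, hc⟩⟩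

lemma IsNonEndpoint.mem_closure_Iio {c : ℝ} (h : IsNonEndpoint c) :
    c ∈ closure (cantorSet ∩ Iio c) :=
  (Metric.mem_closure_iff (α := ℝ)).2 fun ε hε => by
    obtain ⟨x, hx, hxC⟩ := (h.2 ε hε).1
    exact ⟨x, ⟨hxC, hx.2⟩, by rw [Real.dist_eq, abs_lt]; constructor <;> linarith [hx.1, hx.2]⟩

lemma IsNonEndpoint.mem_closure_Ioi {c : ℝ} (h : IsNonEndpoint c) :
    c ∈ closure (cantorSet ∩ Ioi c) :=
  (Metric.mem_closure_iff (α := ℝ)).2 fun ε hε => by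
    obtain ⟨x, hx, hxC⟩ := (h.2 ε hε).2
    exact ⟨x, ⟨hxC, hx.1⟩, by rw [Real.dist_eq, abs_lt]; constructor <;> linarith [hx.1, hx.2]⟩

section Graph

variable {d a : ℕ → ℝ}

lemma eq_or_eq_of_mk_mem_Fset (hsum : Summable a) {x y : ℝ} (h : (x, y) ∈ Fset d a) :
    y = fFun d a x ∨ y = fFunRight d a x := by
  have hsub : {p : ℝ × ℝ | ∃ c ∈ cantorSet, p = (c, fFun d a c)} ⊆
      (fun c => (c, fFun d a c)) '' Iic x ∪ (fun c => (c, fFun d a c)) '' Ioi x := by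
    rintro _ ⟨c, -, rfl⟩
    rcases le_or_gt c x with hc | hc
    exacts [Or.inl ⟨c, hc, rfl⟩, Or.inr ⟨c, hc, rfl⟩]
  have h := closure_mono hsub h
  rw [closure_union] at h
  rcases h with h | h
  exacts [Or.inl (eq_of_mk_mem_closure_image_graph (tendsto_fFun_nhdsLE hsum x) h),
    Or.inr (eq_of_mk_mem_closure_image_graph (tendsto_fFun_nhdsGT hsum x) h)]

lemma mk_notMem_Fset (hsum : Summable a) {x y : ℝ} (hf : y ≠ fFun d a x)
    (hR : y ≠ fFunRight d a x) : (x, y) ∉ Fset d a :=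
  fun h => (eq_or_eq_of_mk_mem_Fset hsum h).elim hf hR

lemma mk_fFun_mem_Fset {x : ℝ} (hx : x ∈ cantorSet) : (x, fFun d a x) ∈ Fset d a :=
  subset_closure ⟨x, hx, rfl⟩

lemma mk_fFunRight_mem_Fset (hsum : Summable a) {x : ℝ} (hx : IsNonEndpoint x) :
    (x, fFunRight d a x) ∈ Fset d a := by
  have : (𝓝[cantorSet ∩ Ioi x] x).NeBot := mem_closure_iff_nhdsWithin_neBot.1 hx.mem_closure_Ioi
  have hlim : Tendsto (fun y => (y, fFun d a y)) (𝓝[cantorSet ∩ Ioi x] x)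
      (𝓝 (x, fFunRight d a x)) :=
    (tendsto_nhdsWithin_of_tendsto_nhds tendsto_id).prodMk_nhds
      ((tendsto_fFun_nhdsGT hsum x).mono_left (nhdsWithin_mono _ inter_subset_right))
  refine mem_closure_of_tendsto hlim ?_
  filter_upwards [self_mem_nhdsWithin] with y hy using ⟨y, hy.1, rfl⟩

end Graph

/-- Open sets `W`, `W'` of the ambient space cutting `S` into the two relatively clopen pieces
`S ∩ W` and `S ∩ W'`. -/
structure IsSeparation {X : Type*} [TopologicalSpace X] (S W W' : Set X) : Prop where
  isOpen_left : IsOpen W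
  isOpen_right : IsOpen W'
  subset_union : S ⊆ W ∪ W'
  inter_inter_eq_empty : S ∩ (W ∩ W') = ∅

namespace IsSeparation

variable {X : Type*} [TopologicalSpace X] {S W W' : Set X}

lemma symm (h : IsSeparation S W W') : IsSeparation S W' W :=
  ⟨h.isOpen_right, h.isOpen_left, h.subset_union.trans (union_comm W W').subset,
    inter_comm W W' ▸ h.inter_inter_eq_empty⟩

lemma notMem_right {p : X} (h : IsSeparation S W W') (hp : p ∈ S) (hpW : p ∈ W) : p ∉ W' :=
  fun hpW' => h.inter_inter_eq_empty.subset ⟨hp, hpW, hpW'⟩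

lemma subset_left_of_isPreconnected (h : IsSeparation S W W') {K : Set X}
    (hK : IsPreconnected K) (hKS : K ⊆ S) {p : X} (hpK : p ∈ K) (hpW : p ∈ W) : K ⊆ W :=
  (isPreconnected_iff_subset_of_disjoint.1 hK W W' h.isOpen_left h.isOpen_right
    (hKS.trans h.subset_union)
    (subset_empty_iff.1 (h.inter_inter_eq_empty ▸ inter_subset_inter_left _ hKS))).resolve_right
    fun hKW' => h.notMem_right (hKS hpK) hpW (hKW' hpK)

end IsSeparation

lemma IsClopen.exists_isSeparation {X : Type*} [TopologicalSpace X] {S : Set X} {A : Set S}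
    (hA : IsClopen A) : ∃ W W', IsSeparation S W W' ∧ A = Subtype.val ⁻¹' W := by
  obtain ⟨W, hW, hWA⟩ := isOpen_induced_iff.1 hA.isOpen
  obtain ⟨W', hW', hWA'⟩ := isOpen_induced_iff.1 hA.compl.isOpen
  refine ⟨W, W', ⟨hW, hW', fun p hp => ?_, ?_⟩, hWA.symm⟩
  · by_cases hpA : (⟨p, hp⟩ : S) ∈ A
    exacts [Or.inl (hWA ▸ hpA : (⟨p, hp⟩ : S) ∈ Subtype.val ⁻¹' W),
      Or.inr (hWA' ▸ (hpA : (⟨p, hp⟩ : S) ∈ Aᶜ) : (⟨p, hp⟩ : S) ∈ Subtype.val ⁻¹' W')]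
  · exact eq_empty_iff_forall_notMem.2 fun p ⟨hp, hpW, hpW'⟩ =>
      (hWA' ▸ hpW' : (⟨p, hp⟩ : S) ∈ Aᶜ) (hWA ▸ hpW : (⟨p, hp⟩ : S) ∈ A)

lemma isTotallyDisconnected_cantorSet : IsTotallyDisconnected cantorSet :=
  totallyDisconnectedSpace_subtype_iff.1 cantorSetHomeomorphNatToBool.symm.totallyDisconnectedSpace

lemma exists_isClopen_mem_notMem_of_fst_ne {S : Set (ℝ × ℝ)}
    (hS : ∀ z ∈ S, z.1 ∈ cantorSet) {p q : S} (hpq : (p : ℝ × ℝ).1 ≠ (q : ℝ × ℝ).1) :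
    ∃ A : Set S, IsClopen A ∧ p ∈ A ∧ q ∉ A := by
  wlog hlt : (p : ℝ × ℝ).1 < (q : ℝ × ℝ).1 generalizing p q
  · obtain ⟨A, hA, hqA, hpA⟩ := this hpq.symm (hpq.symm.lt_of_le (not_lt.1 hlt))
    exact ⟨Aᶜ, hA.compl, hpA, fun h => h hqA⟩
  obtain ⟨m, hmC, hm⟩ :=
    isTotallyDisconnected_iff_lt.1 isTotallyDisconnected_cantorSet _ (hS _ p.2) _ (hS _ q.2) hlt
  have hclosed : {z : S | (z : ℝ × ℝ).1 < m} = {z : S | (z : ℝ × ℝ).1 ≤ m} := by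
    ext z
    exact (show (z : ℝ × ℝ).1 ≠ m from fun he => hmC (he ▸ hS _ z.2)).le_iff_lt.symm
  refine ⟨{z : S | (z : ℝ × ℝ).1 < m}, ⟨?_, ?_⟩, hm.1, not_lt.2 hm.2.le⟩
  · rw [hclosed]
    exact isClosed_le (by fun_prop) continuous_const
  · exact isOpen_lt (by fun_prop) continuous_const

section Fibre

variable {d a : ℕ → ℝ} {U : Set ℝ} {v w : ℝ} {W W' : Set (ℝ × ℝ)}

lemma exists_mem_Icc_mk_mem_Fset (hW : IsSeparation ((U ×ˢ Ioo v w) \ Fset d a) W W')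
    {y s t : ℝ} (hy : y ∈ U) (hs : s ∈ Ioo v w) (ht : t ∈ Ioo v w) (hst : s ≤ t)
    (hsW : (y, s) ∈ W) (htW : (y, t) ∈ W') : ∃ z ∈ Icc s t, (y, z) ∈ Fset d a := by
  by_contra! hz
  have hseg : {y} ×ˢ Icc s t ⊆ (U ×ˢ Ioo v w) \ Fset d a := by
    rintro ⟨_, z⟩ ⟨rfl, hz'⟩
    exact ⟨⟨hy, ordConnected_Ioo.out hs ht hz'⟩, hz z hz'⟩
  have hys : (y, s) ∈ {y} ×ˢ Icc s t := ⟨mem_singleton y, left_mem_Icc.2 hst⟩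
  have hyt : (y, t) ∈ {y} ×ˢ Icc s t := ⟨mem_singleton y, right_mem_Icc.2 hst⟩
  exact hW.notMem_right (hseg hyt) (hW.subset_left_of_isPreconnected
    (isPreconnected_singleton.prod isPreconnected_Icc) hseg hys hsW hyt) htW

lemma eventually_mem_and_mk_mem (hUopen : ∃ O : Set ℝ, IsOpen O ∧ U = O ∩ cantorSet)
    (hWo : IsOpen W) (hW'o : IsOpen W') {x s t : ℝ} (hx : x ∈ U) (hsW : (x, s) ∈ W)
    (htW : (x, t) ∈ W') : ∀ᶠ y in 𝓝 x, y ∈ cantorSet → y ∈ U ∧ (y, s) ∈ W ∧ (y, t) ∈ W' := by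
  obtain ⟨O, hO, rfl⟩ := hUopen
  filter_upwards [hO.mem_nhds hx.1,
    (Continuous.prodMk_left s).continuousAt.eventually_mem (hWo.mem_nhds hsW),
    (Continuous.prodMk_left t).continuousAt.eventually_mem (hW'o.mem_nhds htW)]
    with y hyO hys hyt hyC using ⟨⟨hyO, hyC⟩, hys, hyt⟩

lemma notMem_right_of_fFun_lt (ha : ∀ n, 0 ≤ a n) (hsum : Summable a)
    (hUopen : ∃ O : Set ℝ, IsOpen O ∧ U = O ∩ cantorSet)
    (hW : IsSeparation ((U ×ˢ Ioo v w) \ Fset d a) W W') {x s t : ℝ} (hx : x ∈ U)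
    (hleft : x ∈ closure (cantorSet ∩ Iio x)) (hfs : fFun d a x < s) (hs : s ∈ Ioo v w)
    (ht : t ∈ Ioo v w) (hst : s ≤ t) (hsW : (x, s) ∈ W) : (x, t) ∉ W' := by
  intro htW
  obtain ⟨y, ⟨hyC, hyx⟩, hy⟩ := ((mem_closure_iff_frequently.1 hleft).and_eventually
    (eventually_mem_and_mk_mem hUopen hW.isOpen_left hW.isOpen_right hx hsW htW)).exists
  obtain ⟨hyU, hys, hyt⟩ := hy hyC
  obtain ⟨z, hz, hF⟩ := exists_mem_Icc_mk_mem_Fset hW hyU hs ht hst hys hyt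
  have := fFun_le_fFunRight (d := d) ha hsum y
  have := fFunRight_le_fFun (d := d) ha hsum hyx
  rcases eq_or_eq_of_mk_mem_Fset hsum hF with rfl | rfl <;> linarith [hz.1]

lemma notMem_right_of_lt_fFunRight (ha : ∀ n, 0 ≤ a n) (hsum : Summable a)
    (hUopen : ∃ O : Set ℝ, IsOpen O ∧ U = O ∩ cantorSet)
    (hW : IsSeparation ((U ×ˢ Ioo v w) \ Fset d a) W W') {x s t : ℝ} (hx : x ∈ U)
    (hright : x ∈ closure (cantorSet ∩ Ioi x)) (htR : t < fFunRight d a x) (hs : s ∈ Ioo v w)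
    (ht : t ∈ Ioo v w) (hst : s ≤ t) (hsW : (x, s) ∈ W) : (x, t) ∉ W' := by
  intro htW
  obtain ⟨y, ⟨hyC, hxy⟩, hy⟩ := ((mem_closure_iff_frequently.1 hright).and_eventually
    (eventually_mem_and_mk_mem hUopen hW.isOpen_left hW.isOpen_right hx hsW htW)).exists
  obtain ⟨hyU, hys, hyt⟩ := hy hyC
  obtain ⟨z, hz, hF⟩ := exists_mem_Icc_mk_mem_Fset hW hyU hs ht hst hys hyt
  have := fFun_le_fFunRight (d := d) ha hsum y
  have := fFunRight_le_fFun (d := d) ha hsum hxy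
  rcases eq_or_eq_of_mk_mem_Fset hsum hF with rfl | rfl <;> linarith [hz.2]

lemma notMem_right_of_fFun_lt_fFunRight (ha : ∀ n, 0 ≤ a n) (hsum : Summable a)
    (hUopen : ∃ O : Set ℝ, IsOpen O ∧ U = O ∩ cantorSet)
    (hW : IsSeparation ((U ×ˢ Ioo v w) \ Fset d a) W W') {x s t : ℝ} (hxe : IsNonEndpoint x)
    (hjump : fFun d a x < fFunRight d a x) (hsS : (x, s) ∈ (U ×ˢ Ioo v w) \ Fset d a)
    (htS : (x, t) ∈ (U ×ˢ Ioo v w) \ Fset d a) (hst : s < t) (hsW : (x, s) ∈ W) :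
    (x, t) ∉ W' := by
  obtain ⟨⟨hx, hs⟩, hsF⟩ := hsS
  obtain ⟨⟨-, ht⟩, htF⟩ := htS
  have hsf : s ≠ fFun d a x := fun h => hsF (h ▸ mk_fFun_mem_Fset hxe.1)
  have htR : t ≠ fFunRight d a x := fun h => htF (h ▸ mk_fFunRight_mem_Fset hsum hxe)
  rcases hsf.lt_or_gt with hsf | hsf
  · rcases htR.lt_or_gt with htR | htR
    · exact notMem_right_of_lt_fFunRight ha hsum hUopen hW hx hxe.mem_closure_Ioi htR hs ht
        hst.le hsW
    · obtain ⟨g, hfg, hgR⟩ := exists_between hjump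
      have hg : g ∈ Ioo v w := ⟨hs.1.trans (hsf.trans hfg), (hgR.trans htR).trans ht.2⟩
      rcases hW.subset_union (⟨⟨hx, hg⟩, mk_notMem_Fset hsum hfg.ne' hgR.ne⟩ :
        (x, g) ∈ (U ×ˢ Ioo v w) \ Fset d a) with hgW | hgW'
      · exact notMem_right_of_fFun_lt ha hsum hUopen hW hx hxe.mem_closure_Iio hfg hg ht
          (hgR.trans htR).le hgW
      · exact absurd hgW' (notMem_right_of_lt_fFunRight ha hsum hUopen hW hx hxe.mem_closure_Ioi
          hgR hs hg (hsf.trans hfg).le hsW)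
  · exact notMem_right_of_fFun_lt ha hsum hUopen hW hx hxe.mem_closure_Iio hsf hs ht hst.le hsW

lemma notMem_right_of_mem_left (ha : ∀ n, 0 < a n) (hsum : Summable a)
    (hd_ne : ∀ n, IsNonEndpoint (d n)) (hd_dense : cantorSet ⊆ closure (range d))
    (hUsub : U ⊆ cantorSet) (hUopen : ∃ O : Set ℝ, IsOpen O ∧ U = O ∩ cantorSet)
    (hW : IsSeparation ((U ×ˢ Ioo v w) \ Fset d a) W W') {x s t : ℝ}
    (hsS : (x, s) ∈ (U ×ˢ Ioo v w) \ Fset d a) (htS : (x, t) ∈ (U ×ˢ Ioo v w) \ Fset d a)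
    (hst : s < t) (hsW : (x, s) ∈ W) : (x, t) ∉ W' := by
  have ha0 : ∀ n, 0 ≤ a n := fun n => (ha n).le
  by_cases hxd : x ∈ range d
  · obtain ⟨m, rfl⟩ := hxd
    exact notMem_right_of_fFun_lt_fFunRight ha0 hsum hUopen hW (hd_ne m)
      (fFun_lt_fFunRight ha0 hsum (ha m)) hsS htS hst hsW
  intro htW
  have hxC : x ∈ cantorSet := hUsub hsS.1.1
  by_cases hmid : fFun d a x ∈ Ioo s t
  · -- `f` is continuous at `x`, so a nearby `d k` has its whole jump inside `(s, t)`.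
    have hnear : ∀ᶠ y in 𝓝 x, (y ∈ cantorSet → y ∈ U ∧ (y, s) ∈ W ∧ (y, t) ∈ W') ∧
        fFun d a y ∈ Ioo s t ∧ fFunRight d a y ∈ Ioo s t :=
      (eventually_mem_and_mk_mem hUopen hW.isOpen_left hW.isOpen_right hsS.1.1 hsW htW).and
        (((tendsto_fFun_nhds_of_notMem hsum hxd).eventually (isOpen_Ioo.mem_nhds hmid)).and
          ((tendsto_fFunRight_nhds_of_notMem hsum hxd).eventually (isOpen_Ioo.mem_nhds hmid)))
    obtain ⟨_, ⟨k, rfl⟩, hk, hfk, hRk⟩ :=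
      ((mem_closure_iff_frequently.1 (hd_dense hxC)).and_eventually hnear).exists
    obtain ⟨hkU, hks, hkt⟩ := hk (hd_ne k).1
    exact notMem_right_of_fFun_lt_fFunRight ha0 hsum hUopen hW (hd_ne k)
      (fFun_lt_fFunRight ha0 hsum (ha k))
      ⟨⟨hkU, hsS.1.2⟩, mk_notMem_Fset hsum hfk.1.ne hRk.1.ne⟩
      ⟨⟨hkU, htS.1.2⟩, mk_notMem_Fset hsum hfk.2.ne' hRk.2.ne'⟩ hst hks hkt
  · obtain ⟨z, hz, hF⟩ := exists_mem_Icc_mk_mem_Fset hW hsS.1.1 hsS.1.2 htS.1.2 hst.le hsW htW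
    obtain rfl : z = fFun d a x :=
      (eq_or_eq_of_mk_mem_Fset hsum hF).elim id fun h => h.trans (fFunRight_eq_fFun hxd)
    have hsf : s ≠ fFun d a x := fun h => hsS.2 (h ▸ mk_fFun_mem_Fset hxC)
    have htf : t ≠ fFun d a x := fun h => htS.2 (h ▸ mk_fFun_mem_Fset hxC)
    exact hmid ⟨hz.1.lt_of_ne hsf, hz.2.lt_of_ne htf.symm⟩

lemma mem_left_of_fst_eq (ha : ∀ n, 0 < a n) (hsum : Summable a)
    (hd_ne : ∀ n, IsNonEndpoint (d n)) (hd_dense : cantorSet ⊆ closure (range d))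
    (hUsub : U ⊆ cantorSet) (hUopen : ∃ O : Set ℝ, IsOpen O ∧ U = O ∩ cantorSet)
    (hW : IsSeparation ((U ×ˢ Ioo v w) \ Fset d a) W W') {z z' : ℝ × ℝ}
    (hz : z ∈ (U ×ˢ Ioo v w) \ Fset d a) (hz' : z' ∈ (U ×ˢ Ioo v w) \ Fset d a)
    (hfst : z'.1 = z.1) (hzW : z ∈ W) : z' ∈ W := by
  obtain ⟨x, y⟩ := z
  obtain ⟨x', y'⟩ := z'
  obtain rfl : x' = x := hfst
  rcases lt_trichotomy y y' with h | rfl | h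
  · exact (hW.subset_union hz').resolve_right
      (notMem_right_of_mem_left ha hsum hd_ne hd_dense hUsub hUopen hW hz hz' h hzW)
  · exact hzW
  · by_contra hz'W
    exact notMem_right_of_mem_left ha hsum hd_ne hd_dense hUsub hUopen hW.symm hz' hz h
      ((hW.subset_union hz').resolve_left hz'W) hzW

end Fibre

theorem stmt7_general (d a : ℕ → ℝ)
    (hd_ne : ∀ n, IsNonEndpoint (d n)) (hd_dense : cantorSet ⊆ closure (Set.range d))
    (ha_pos : ∀ n, 0 < a n) (ha_sum : ∑' n, a n = 1)
    (U : Set ℝ) (hUsub : U ⊆ cantorSet) (hUopen : ∃ O : Set ℝ, IsOpen O ∧ U = O ∩ cantorSet)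
    (v w : ℝ) (c : ℝ)
    (p : ↥((U ×ˢ Set.Ioo v w) \ Fset d a)) (hp : (p : ℝ × ℝ).1 = c) :
    {q : ↥((U ×ˢ Set.Ioo v w) \ Fset d a) | (q : ℝ × ℝ).1 = c} =
      ⋂₀ {A : Set ↥((U ×ˢ Set.Ioo v w) \ Fset d a) | IsClopen A ∧ p ∈ A} := by
  have hsum : Summable a := by
    by_contra h
    simp [tsum_eq_zero_of_not_summable h] at ha_sum
  ext q
  refine ⟨fun hq A ⟨hA, hpA⟩ => ?_, fun hq => ?_⟩
  · obtain ⟨W, W', hW, rfl⟩ := hA.exists_isSeparation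
    exact mem_left_of_fst_eq ha_pos hsum hd_ne hd_dense hUsub hUopen hW p.2 q.2
      (hq.trans hp.symm) hpA
  · by_contra hne
    obtain ⟨A, hA, hpA, hqA⟩ := exists_isClopen_mem_notMem_of_fst_ne
      (fun z hz => hUsub hz.1.1) (hp.trans_ne (Ne.symm hne))
    exact hqA (hq A ⟨hA, hpA⟩)

/-- If `U` is relatively open in `C` and `V = (v, w)` is a nonempty open interval, then for every
`c ∈ U` and every point `p` of `({c} × V) \ F`, the set `({c} × V) \ F` is the quasi-component
of `p` in `S = (U × V) \ F` (with the subspace topology): it equals the intersection of all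
clopen subsets of `S` containing `p`. -/
theorem stmt7 (d a : ℕ → ℝ) (hd_inj : Function.Injective d)
    (hd_ne : ∀ n, IsNonEndpoint (d n)) (hd_dense : cantorSet ⊆ closure (Set.range d))
    (ha_pos : ∀ n, 0 < a n) (ha_sum : ∑' n, a n = 1)
    (U : Set ℝ) (hUsub : U ⊆ cantorSet) (hUopen : ∃ O : Set ℝ, IsOpen O ∧ U = O ∩ cantorSet)
    (v w : ℝ) (hvw : v < w) (c : ℝ) (hc : c ∈ U)
    (p : ↥((U ×ˢ Set.Ioo v w) \ Fset d a)) (hp : (p : ℝ × ℝ).1 = c) :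
    {q : ↥((U ×ˢ Set.Ioo v w) \ Fset d a) | (q : ℝ × ℝ).1 = c} =
      ⋂₀ {A : Set ↥((U ×ˢ Set.Ioo v w) \ Fset d a) | IsClopen A ∧ p ∈ A} :=
  stmt7_general d a hd_ne hd_dense ha_pos ha_sum U hUsub hUopen v w c p hp
end

section
/- Y is dense in C × ℝ; in fact, for every c ∈ C the fiber Y ∩ ({c} × ℝ) is dense in {c} × ℝ. -/
/-- `Y = (C × ℝ) \ ⋃ₙ cl(Gr(f + qₙ))`, where `(qₙ)` enumerates `ℚ`. -/
noncomputable def Yset (d a : ℕ → ℝ) (q : ℕ → ℚ) : Set (ℝ × ℝ) :=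
  (cantorSet ×ˢ (Set.univ : Set ℝ)) \
    ⋃ n : ℕ, closure {p : ℝ × ℝ | ∃ c ∈ cantorSet, p = (c, fFun d a c + (q n : ℝ))}

/-- The "right limit" version of `fFun`: `∑_{n : d n ≤ c} a n`. -/
noncomputable def fPlus (d a : ℕ → ℝ) (c : ℝ) : ℝ := ∑' n, if d n ≤ c then a n else 0

section Aux

variable {d a : ℕ → ℝ}

lemma summable_if (ha0 : ∀ n, 0 ≤ a n) (ha : Summable a) (P : ℕ → Prop) [DecidablePred P] :
    Summable (fun n => if P n then a n else 0) := by
  refine Summable.of_nonneg_of_le (fun n => ?_) (fun n => ?_) ha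
  · split <;> simp [ha0 _]
  · split <;> simp [ha0 _]

lemma tail_small (ha0 : ∀ n, 0 ≤ a n) (ha : Summable a) {ε : ℝ} (hε : 0 < ε) :
    ∃ F : Finset ℕ, ∀ (P : ℕ → Prop) [DecidablePred P], (∀ n, P n → n ∉ F) →
      ∑' n, (if P n then a n else 0) ≤ ε := by
  obtain ⟨F, hF⟩ := ha.vanishing (Metric.ball_mem_nhds (0 : ℝ) hε)
  refine ⟨F, fun P _ hP => ?_⟩
  refine Summable.tsum_le_of_sum_le (summable_if ha0 ha P) (fun s => ?_)
  have : ∑ n ∈ s, (if P n then a n else 0) = ∑ n ∈ s.filter P, a n := by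
    rw [Finset.sum_filter]
  rw [this]
  have hdisj : Disjoint (s.filter P) F := by
    refine Finset.disjoint_left.2 (fun n hn => ?_)
    exact hP n (Finset.mem_filter.1 hn).2
  have := hF _ hdisj
  rw [Metric.mem_ball, Real.dist_eq, sub_zero] at this
  exact le_of_lt (lt_of_le_of_lt (le_abs_self _) this)

lemma fFun_mono_s10 (ha0 : ∀ n, 0 ≤ a n) (ha : Summable a) {c c' : ℝ} (h : c' ≤ c) :
    fFun d a c' ≤ fFun d a c := by
  refine Summable.tsum_le_tsum (fun n => ?_) (summable_if ha0 ha _) (summable_if ha0 ha _)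
  by_cases h1 : d n < c'
  · rw [if_pos h1, if_pos (lt_of_lt_of_le h1 h)]
  · rw [if_neg h1]; split <;> simp [ha0 _]

lemma fPlus_le_fFun (ha0 : ∀ n, 0 ≤ a n) (ha : Summable a) {c c' : ℝ} (h : c < c') :
    fPlus d a c ≤ fFun d a c' := by
  refine Summable.tsum_le_tsum (fun n => ?_) (summable_if ha0 ha _) (summable_if ha0 ha _)
  by_cases h1 : d n ≤ c
  · rw [if_pos h1, if_pos (lt_of_le_of_lt h1 h)]
  · rw [if_neg h1]; split <;> simp [ha0 _]

lemma split_left (ha0 : ∀ n, 0 ≤ a n) (ha : Summable a) {c c' : ℝ} (h : c' ≤ c) :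
    fFun d a c = fFun d a c' + ∑' n, (if c' ≤ d n ∧ d n < c then a n else 0) := by
  rw [fFun, fFun, ← Summable.tsum_add (summable_if ha0 ha _) (summable_if ha0 ha _)]
  refine tsum_congr (fun n => ?_)
  by_cases h1 : d n < c'
  · rw [if_pos h1, if_pos (lt_of_lt_of_le h1 h),
      if_neg (by rintro ⟨h2, _⟩; exact absurd h1 (not_lt.2 h2)), add_zero]
  · rw [if_neg h1, zero_add]
    by_cases h2 : d n < c
    · rw [if_pos h2, if_pos ⟨not_lt.1 h1, h2⟩]
    · rw [if_neg h2, if_neg (by rintro ⟨_, h3⟩; exact h2 h3)]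

lemma split_right (ha0 : ∀ n, 0 ≤ a n) (ha : Summable a) {c c' : ℝ} (h : c < c') :
    fFun d a c' = fPlus d a c + ∑' n, (if c < d n ∧ d n < c' then a n else 0) := by
  rw [fFun, fPlus, ← Summable.tsum_add (summable_if ha0 ha _) (summable_if ha0 ha _)]
  refine tsum_congr (fun n => ?_)
  by_cases h1 : d n ≤ c
  · rw [if_pos h1, if_pos (lt_of_le_of_lt h1 h),
      if_neg (by rintro ⟨h2, _⟩; exact absurd h1 (not_le.2 h2)), add_zero]
  · rw [if_neg h1, zero_add]
    by_cases h2 : d n < c'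
    · rw [if_pos h2, if_pos ⟨not_le.1 h1, h2⟩]
    · rw [if_neg h2, if_neg (by rintro ⟨_, h3⟩; exact h2 h3)]

lemma fControl (ha0 : ∀ n, 0 ≤ a n) (ha : Summable a) (c : ℝ) {ε : ℝ} (hε : 0 < ε) :
    ∃ δ > 0, (∀ c', c - δ < c' → c' ≤ c → fFun d a c ≤ fFun d a c' + ε) ∧
      (∀ c', c < c' → c' < c + δ → fFun d a c' ≤ fPlus d a c + ε) := by
  classical
  obtain ⟨F, hF⟩ := tail_small ha0 ha hε
  set T := (F.filter (fun n => d n ≠ c)).image (fun n => |d n - c|) with hT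
  have hδpos : ∀ x ∈ T, 0 < x := by
    intro x hx
    obtain ⟨n, hn, rfl⟩ := Finset.mem_image.1 hx
    have := (Finset.mem_filter.1 hn).2
    exact abs_pos.2 (sub_ne_zero.2 this)
  by_cases hTne : T.Nonempty
  · refine ⟨T.min' hTne, hδpos _ (T.min'_mem hTne), ?_, ?_⟩
    · intro c' h1 h2
      rw [split_left ha0 ha h2]
      have : (∑' n, if c' ≤ d n ∧ d n < c then a n else 0) ≤ ε := by
        refine hF _ (fun n hn hnF => ?_)
        have hne : d n ≠ c := ne_of_lt hn.2
        have hmem : |d n - c| ∈ T := Finset.mem_image.2 ⟨n, Finset.mem_filter.2 ⟨hnF, hne⟩, rfl⟩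
        have hle := T.min'_le _ hmem
        have habs : |d n - c| = c - d n := by
          rw [abs_sub_comm]; exact abs_of_nonneg (by linarith [hn.2])
        linarith [hn.1, hn.2, hle, habs]
      linarith
    · intro c' h1 h2
      rw [split_right ha0 ha h1]
      have : (∑' n, if c < d n ∧ d n < c' then a n else 0) ≤ ε := by
        refine hF _ (fun n hn hnF => ?_)
        have hne : d n ≠ c := ne_of_gt hn.1
        have hmem : |d n - c| ∈ T := Finset.mem_image.2 ⟨n, Finset.mem_filter.2 ⟨hnF, hne⟩, rfl⟩
        have hle := T.min'_le _ hmem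
        have habs : |d n - c| = d n - c := abs_of_nonneg (by linarith [hn.1])
        linarith [hn.1, hn.2, hle, habs]
      linarith
  · refine ⟨1, one_pos, ?_, ?_⟩
    · intro c' h1 h2
      rw [split_left ha0 ha h2]
      have : (∑' n, if c' ≤ d n ∧ d n < c then a n else 0) ≤ ε := by
        refine hF _ (fun n hn hnF => ?_)
        exact hTne ⟨_, Finset.mem_image.2 ⟨n, Finset.mem_filter.2 ⟨hnF, ne_of_lt hn.2⟩, rfl⟩⟩
      linarith
    · intro c' h1 h2
      rw [split_right ha0 ha h1]
      have : (∑' n, if c < d n ∧ d n < c' then a n else 0) ≤ ε := by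
        refine hF _ (fun n hn hnF => ?_)
        exact hTne ⟨_, Finset.mem_image.2 ⟨n, Finset.mem_filter.2 ⟨hnF, ne_of_gt hn.1⟩, rfl⟩⟩
      linarith

/-- Key fiber lemma: any point of the closure of the graph of `f + t` (over any subset of `ℝ`)
lying above `c` has second coordinate `f c + t` or `f⁺ c + t`. -/
lemma fiber_lemma (ha0 : ∀ n, 0 ≤ a n) (ha : Summable a) (c y t : ℝ)
    (hy : (c, y) ∈ closure {p : ℝ × ℝ | ∃ x ∈ cantorSet, p = (x, fFun d a x + t)}) :
    y = fFun d a c + t ∨ y = fPlus d a c + t := by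
  by_contra h
  push_neg at h
  obtain ⟨h1, h2⟩ := h
  set ε := min |y - (fFun d a c + t)| |y - (fPlus d a c + t)| with hε
  have hεpos : 0 < ε :=
    lt_min (abs_pos.2 (sub_ne_zero.2 h1)) (abs_pos.2 (sub_ne_zero.2 h2))
  obtain ⟨δ, hδpos, hL, hR⟩ := fControl (d := d) ha0 ha c (half_pos hεpos)
  set ρ := min δ (ε / 2) with hρ
  have hρpos : 0 < ρ := lt_min hδpos (half_pos hεpos)
  obtain ⟨p, hp, hdist⟩ := Metric.mem_closure_iff.1 hy ρ hρpos
  obtain ⟨x, -, rfl⟩ := hp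
  rw [Prod.dist_eq, max_lt_iff] at hdist
  obtain ⟨hd1, hd2⟩ := hdist
  rw [Real.dist_eq] at hd1 hd2
  have hxδ : |c - x| < δ := lt_of_lt_of_le hd1 (min_le_left _ _)
  have hyε : |y - (fFun d a x + t)| < ε / 2 := lt_of_lt_of_le hd2 (min_le_right _ _)
  rcases le_or_gt x c with hxc | hxc
  · -- left side: f c - ε/2 ≤ f x ≤ f c
    have hxl : c - δ < x := by
      rw [abs_lt] at hxδ; linarith [hxδ.2]
    have hflo : fFun d a c ≤ fFun d a x + ε / 2 := hL x hxl hxc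
    have hfhi : fFun d a x ≤ fFun d a c := fFun_mono_s10 ha0 ha hxc
    have : |y - (fFun d a c + t)| < ε := by
      have : |y - (fFun d a c + t)| ≤ |y - (fFun d a x + t)| + |fFun d a x - fFun d a c| := by
        have := abs_sub_abs_le_abs_sub (y - (fFun d a c + t)) (y - (fFun d a x + t))
        calc |y - (fFun d a c + t)| = |(y - (fFun d a x + t)) + (fFun d a x - fFun d a c)| := by
              ring_nf
          _ ≤ _ := abs_add_le _ _
      have habs : |fFun d a x - fFun d a c| ≤ ε / 2 := by
        rw [abs_le]; constructor <;> linarith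
      linarith
    exact absurd this (not_lt.2 (le_trans (min_le_left _ _) (le_refl _)))
  · -- right side: f⁺ c ≤ f x ≤ f⁺ c + ε/2
    have hxr : x < c + δ := by
      rw [abs_lt] at hxδ; linarith [hxδ.1]
    have hflo : fPlus d a c ≤ fFun d a x := fPlus_le_fFun ha0 ha hxc
    have hfhi : fFun d a x ≤ fPlus d a c + ε / 2 := hR x hxc hxr
    have : |y - (fPlus d a c + t)| < ε := by
      have : |y - (fPlus d a c + t)| ≤ |y - (fFun d a x + t)| + |fFun d a x - fPlus d a c| := by
        calc |y - (fPlus d a c + t)| = |(y - (fFun d a x + t)) + (fFun d a x - fPlus d a c)| := by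
              ring_nf
          _ ≤ _ := abs_add_le _ _
      have habs : |fFun d a x - fPlus d a c| ≤ ε / 2 := by
        rw [abs_le]; constructor <;> linarith
      linarith
    exact absurd this (not_lt.2 (min_le_right _ _))

end Aux

/-- `Y` is dense in `C × ℝ`; in fact, for every `c ∈ C` the fiber `Y ∩ ({c} × ℝ)` is dense in
`{c} × ℝ`. -/
theorem stmt10 (d a : ℕ → ℝ) (hd_inj : Function.Injective d)
    (hd_ne : ∀ n, IsNonEndpoint (d n)) (hd_dense : cantorSet ⊆ closure (Set.range d))
    (ha_pos : ∀ n, 0 < a n) (ha_sum : ∑' n, a n = 1)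
    (q : ℕ → ℚ) (hq : Function.Surjective q) :
    (∀ p ∈ cantorSet ×ˢ (Set.univ : Set ℝ), p ∈ closure (Yset d a q)) ∧
    ∀ c ∈ cantorSet, ∀ r : ℝ,
      (c, r) ∈ closure (Yset d a q ∩ ({c} ×ˢ (Set.univ : Set ℝ))) := by
  have ha0 : ∀ n, 0 ≤ a n := fun n => (ha_pos n).le
  have ha : Summable a := by
    by_contra hns
    rw [tsum_eq_zero_of_not_summable hns] at ha_sum
    norm_num at ha_sum
  have main : ∀ c ∈ cantorSet, ∀ r : ℝ,
      (c, r) ∈ closure (Yset d a q ∩ ({c} ×ˢ (Set.univ : Set ℝ))) := by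
    intro c hc r
    set B : Set ℝ := (Set.range (fun n => fFun d a c + (q n : ℝ))) ∪
      (Set.range (fun n => fPlus d a c + (q n : ℝ))) with hB
    have hBc : B.Countable := (Set.countable_range _).union (Set.countable_range _)
    have hsub : ({c} : Set ℝ) ×ˢ Bᶜ ⊆ Yset d a q ∩ ({c} ×ˢ (Set.univ : Set ℝ)) := by
      rintro ⟨x, y⟩ ⟨hx, hyB⟩
      rw [Set.mem_singleton_iff] at hx
      subst hx
      refine ⟨⟨⟨hc, trivial⟩, ?_⟩, rfl, trivial⟩
      intro hmem
      rw [Set.mem_iUnion] at hmem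
      obtain ⟨n, hn⟩ := hmem
      rcases fiber_lemma ha0 ha x y (q n : ℝ) hn with h | h
      · exact hyB (Or.inl ⟨n, h.symm⟩)
      · exact hyB (Or.inr ⟨n, h.symm⟩)
    refine closure_mono hsub ?_
    rw [closure_prod_eq, closure_singleton, (hBc.dense_compl ℝ).closure_eq]
    exact ⟨rfl, trivial⟩
  refine ⟨fun p hp => ?_, main⟩
  obtain ⟨hp1, -⟩ := hp
  have := main p.1 hp1 p.2
  exact closure_mono Set.inter_subset_left this
end

section
/- Let W be a connected, separable, completely metrizable topological space with more than one point, and suppose that every closed subset S ⊆ W for which W \ S is not connected is uncountable. Then W is not biconnected: there exists a subset Z ⊆ W such that both Z and W \ Z are connected and each contains more than one point. -/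
/-!
A set meeting every closed separator `S` (a closed set with disconnected complement) is
connected: if it split along two relatively clopen pieces, complete normality would separate those
pieces by disjoint open sets `U`, `V`, and `(U ∪ V)ᶜ` is a closed separator it misses. By
hypothesis every closed separator is uncountable, hence (Polish space) of size `𝔠`, while a second
countable space has at most `𝔠` closed sets. A transfinite recursion of length `𝔠` then picks, for
every separator, two fresh points for `Z` and two for its complement, so both meet every separator.
-/

open Cardinal Set

universe u

theorem exists_injective_forall_mem {ι X : Type u} (T : ι → Set X)
    (hT : ∀ i, #ι ≤ #(T i)) : ∃ f : ι → X, Function.Injective f ∧ ∀ i, f i ∈ T i := by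
  obtain ⟨_, _, hord⟩ := exists_ord_eq_type_lt ι
  have hfresh (i : ι) (s : Set X) (hs : #s < #ι) : ∃ x ∈ T i, x ∉ s := by
    by_contra! h
    exact ((hT i).trans (mk_le_mk_of_subset h)).not_gt hs
  choose pick hpick_mem hpick_fresh using hfresh
  -- each `f i` is a fresh point of `T i`, since fewer than `#ι` points precede it
  let f : ι → X := WellFoundedLT.fix fun i g ↦
    pick i (range fun j : Iio i ↦ g j j.2) (mk_range_le.trans_lt (mk_Iio_lt i hord))
  have hf (i : ι) : f i = pick i (range fun j : Iio i ↦ f j)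
      (mk_range_le.trans_lt (mk_Iio_lt i hord)) :=
    WellFoundedLT.fix_eq _ i
  have hf_mem (i : ι) : f i ∈ T i := by rw [hf i]; exact hpick_mem i _ _
  have hf_fresh (i : ι) : f i ∉ range fun j : Iio i ↦ f j := by
    rw [hf i]; exact hpick_fresh i _ _
  refine ⟨f, fun i j hij ↦ ?_, hf_mem⟩
  rcases lt_trichotomy i j with hlt | rfl | hlt
  · exact absurd ⟨⟨i, hlt⟩, hij⟩ (hf_fresh j)
  · rfl
  · exact absurd ⟨⟨j, hlt⟩, hij.symm⟩ (hf_fresh i)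

theorem IsClosed.continuum_le_mk_of_not_countable {X : Type*} [TopologicalSpace X]
    [PolishSpace X] {C : Set X} (hC : IsClosed C) (hunc : ¬C.Countable) : 𝔠 ≤ #C := by
  obtain ⟨f, hfC, -, hf⟩ := hC.exists_nat_bool_injection_of_not_countable hunc
  simpa using lift_mk_le_lift_mk_of_injective (β := C)
    (f := fun a ↦ ⟨f a, hfC (mem_range_self a)⟩) fun a b h ↦ hf (congrArg Subtype.val h)

open TopologicalSpace in
theorem mk_isClosed_le_continuum (X : Type*) [TopologicalSpace X] [SecondCountableTopology X] :
    #{C : Set X // IsClosed C} ≤ 𝔠 := by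
  have hB := isBasis_countableBasis X
  let complSUnion (s : Set (countableBasis X)) : {C : Set X // IsClosed C} :=
    ⟨(⋃₀ (Subtype.val '' s))ᶜ, (isOpen_sUnion <| by
      rintro _ ⟨t, -, rfl⟩; exact hB.isOpen t.2).isClosed_compl⟩
  have hsurj : Function.Surjective complSUnion := by
    rintro ⟨C, hC⟩
    obtain ⟨S, hSB, hS⟩ := hB.open_eq_sUnion hC.isOpen_compl
    refine ⟨Subtype.val ⁻¹' S, Subtype.ext ?_⟩
    simp [complSUnion, image_preimage_eq_inter_range, inter_eq_left.2 hSB, ← hS]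
  calc #{C : Set X // IsClosed C} ≤ #(Set (countableBasis X)) := mk_le_of_surjective hsurj
    _ = 2 ^ #(countableBasis X) := mk_set
    _ ≤ 2 ^ ℵ₀ := power_le_power_left two_ne_zero <|
        mk_le_aleph0_iff.2 (countable_countableBasis X).to_subtype
    _ = 𝔠 := two_power_aleph0

section Separator

variable {X : Type*} [TopologicalSpace X]

def IsClosedSeparator (S : Set X) : Prop := IsClosed S ∧ ¬IsPreconnected Sᶜ

theorem isClosedSeparator_compl_union {U V : Set X} (hU : IsOpen U) (hV : IsOpen V)
    (hUV : Disjoint U V) {x y : X} (hx : x ∈ U) (hy : y ∈ V) :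
    IsClosedSeparator (U ∪ V)ᶜ := by
  refine ⟨(hU.union hV).isClosed_compl, fun h ↦ ?_⟩
  rw [compl_compl] at h
  obtain ⟨z, -, hzU, hzV⟩ := h U V hU hV subset_rfl ⟨x, .inl hx, hx⟩ ⟨y, .inr hy, hy⟩
  exact disjoint_left.1 hUV hzU hzV

theorem exists_isClosedSeparator [T2Space X] [Nontrivial X] :
    ∃ S : Set X, IsClosedSeparator S := by
  obtain ⟨x, y, hxy⟩ := exists_pair_ne X
  obtain ⟨U, V, hU, hV, hxU, hyV, hUV⟩ := t2_separation hxy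
  exact ⟨_, isClosedSeparator_compl_union hU hV hUV hxU hyV⟩

theorem isPreconnected_of_forall_isClosedSeparator_inter_nonempty [CompletelyNormalSpace X]
    {Y : Set X} (hY : ∀ S, IsClosedSeparator S → (Y ∩ S).Nonempty) : IsPreconnected Y := by
  rintro u v hu hv hYuv ⟨x, hxY, hxu⟩ ⟨y, hyY, hyv⟩
  by_contra huv
  have hu_v : Disjoint (Y ∩ u) v := disjoint_left.2 fun z hz hzv ↦ huv ⟨z, hz.1, hz.2, hzv⟩
  have hv_u : Disjoint u (Y ∩ v) := disjoint_left.2 fun z hzu hz ↦ huv ⟨z, hz.1, hzu, hz.2⟩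
  obtain ⟨U, V, hU, hV, hYuU, hYvV, hUV⟩ : SeparatedNhds (Y ∩ u) (Y ∩ v) :=
    separatedNhds_iff_disjoint.2 <| completely_normal
      ((hu_v.closure_left hv).mono_right inter_subset_right)
      ((hv_u.closure_right hu).mono_left inter_subset_right)
  obtain ⟨z, hzY, hzUV⟩ := hY _ (isClosedSeparator_compl_union hU hV hUV
    (hYuU ⟨hxY, hxu⟩) (hYvV ⟨hyY, hyv⟩))
  exact hzUV ((hYuv hzY).imp (fun h ↦ hYuU ⟨hzY, h⟩) (fun h ↦ hYvV ⟨hzY, h⟩))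

end Separator

theorem stmt12_general (W : Type*) [TopologicalSpace W] [PolishSpace W] [Nontrivial W]
    (hsep : ∀ S : Set W, IsClosed S → ¬ IsPreconnected Sᶜ → ¬ S.Countable) :
    ∃ Z : Set W, IsConnected Z ∧ IsConnected Zᶜ ∧ Z.Nontrivial ∧ Zᶜ.Nontrivial := by
  let I := {S : Set W // IsClosedSeparator S}
  obtain ⟨S₀, hS₀⟩ := exists_isClosedSeparator (X := W)
  let i₀ : I := ⟨S₀, hS₀⟩
  have hI : #(I × Bool × Bool) ≤ 𝔠 := by
    calc #(I × Bool × Bool) = #I * 4 := by simp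
      _ ≤ 𝔠 * 4 := by
        gcongr
        exact (mk_le_mk_of_subset fun _ hS ↦ hS.1).trans (mk_isClosed_le_continuum W)
      _ = 𝔠 := continuum_mul_nat (by norm_num)
  -- each separator receives four distinct points, two of them in `Z` and two outside
  obtain ⟨f, hf, hfS⟩ := exists_injective_forall_mem (fun k : I × Bool × Bool ↦ k.1.1) fun k ↦
    hI.trans (k.1.2.1.continuum_le_mk_of_not_countable (hsep _ k.1.2.1 k.1.2.2))
  let Z := range fun k : I × Bool ↦ f (k.1, k.2, true)
  have hZ (i : I) (b : Bool) : f (i, b, true) ∈ Z := mem_range_self (i, b)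
  have hZc (i : I) (b : Bool) : f (i, b, false) ∈ Zᶜ := by
    rintro ⟨k, hk⟩
    simpa using hf hk
  refine ⟨Z, ⟨⟨_, hZ i₀ true⟩, isPreconnected_of_forall_isClosedSeparator_inter_nonempty
      fun S hS ↦ ⟨_, hZ ⟨S, hS⟩ true, hfS (⟨S, hS⟩, true, true)⟩⟩,
    ⟨⟨_, hZc i₀ true⟩, isPreconnected_of_forall_isClosedSeparator_inter_nonempty
      fun S hS ↦ ⟨_, hZc ⟨S, hS⟩ true, hfS (⟨S, hS⟩, true, false)⟩⟩,
    ⟨_, hZ i₀ true, _, hZ i₀ false, fun h ↦ by simpa using hf h⟩,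
    ⟨_, hZc i₀ true, _, hZc i₀ false, fun h ↦ by simpa using hf h⟩⟩

/-- Let `W` be a connected, separable, completely metrizable space (i.e. a connected Polish
space) with more than one point, in which every closed set whose complement is disconnected is
uncountable. Then `W` is not biconnected: there is `Z ⊆ W` such that `Z` and `W \ Z` are both
connected and each has more than one point. -/
theorem stmt12 (W : Type*) [TopologicalSpace W] [PolishSpace W] [ConnectedSpace W]
    [Nontrivial W]
    (hsep : ∀ S : Set W, IsClosed S → ¬ IsPreconnected Sᶜ → ¬ S.Countable) :
    ∃ Z : Set W, IsConnected Z ∧ IsConnected Zᶜ ∧ Z.Nontrivial ∧ Zᶜ.Nontrivial :=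
  stmt12_general W hsep
end
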